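/- arXiv:1606.00700 — 3 statements merged into one kernel-verified Lean document; each statement's English description precedes it below -/
import Mathlib

section
/- Let m ≥ 1 and τ = (τ_1,...,τ_m) with 1 ≤ τ_j < ∞ for each j. For n ∈ ℕ let ϰ(n) = { s = (s_1,...,s_m) ∈ ℤ_+^m : s_1 + ... + s_m = n }. Then the mixed ℓ_τ̄-norm of the indicator sequence of ϰ(n), i.e. the iterated norm ( Σ_{s_m} ( ... ( Σ_{s_1} χ_{ϰ(n)}(s)^{τ_1} )^{τ_2/τ_1} ... )^{τ_m/τ_{m-1}} )^{1/τ_m}, is bounded above and below by positive constants (depending only on m and τ̄) times n^{Σ_{j=2}^m 1/τ_j}. -/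
open scoped BigOperators ENNReal
open MeasureTheory Real Set

noncomputable section

/-- Iterated mixed sequence norm: `ℓ_{τ_1}` in the first index, then `ℓ_{τ_2}`, etc. -/
def mixedSeqNorm : (m : ℕ) → (Fin m → ℝ) → ((Fin m → ℕ) → ℝ) → ℝ
  | 0, _, a => |a (fun i => i.elim0)|
  | m + 1, τ, a =>
      mixedSeqNorm m (fun j => τ j.succ)
        (fun s => (∑' k : ℕ, |a (Fin.cons k s)| ^ (τ 0)) ^ (1 / τ 0))

/-- `(2^{-s_1},...,2^{-s_m})`. -/
def negTwoPow {m : ℕ} (s : Fin m → ℕ) : Fin m → ℝ := fun j => (2 : ℝ) ^ (-(s j : ℝ))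

/-- `Γ(Ω,N) = { s : Ω(2^{-s}) ≥ 1/N }`. -/
def Gam {m : ℕ} (Ω : (Fin m → ℝ) → ℝ) (N : ℝ) : Set (Fin m → ℕ) :=
  {s | 1 / N ≤ Ω (negTwoPow s)}

/-- `Γ^⊥(Ω,N)`, the complement of `Γ(Ω,N)` in `ℤ_+^m`. -/
def GamPerp {m : ℕ} (Ω : (Fin m → ℝ) → ℝ) (N : ℝ) : Set (Fin m → ℕ) :=
  (Gam Ω N)ᶜ

/-- `Λ(Ω,N) = Γ^⊥(Ω,N) \ Γ^⊥(Ω,2^l N)`. -/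
def Lam {m : ℕ} (Ω : (Fin m → ℝ) → ℝ) (l : ℕ) (N : ℝ) : Set (Fin m → ℕ) :=
  GamPerp Ω N \ GamPerp Ω (2 ^ l * N)

/-- A function of mixed modulus-of-continuity type of order `l`. -/
structure IsMixedModulus {m : ℕ} (l : ℕ) (Ω : (Fin m → ℝ) → ℝ) : Prop where
  pos : ∀ t : Fin m → ℝ, (∀ j, 0 < t j) → 0 < Ω t
  zero : ∀ t : Fin m → ℝ, (∃ j, t j = 0) → Ω t = 0
  mono : ∀ t₁ t₂ : Fin m → ℝ, (∀ j, t₁ j ≤ t₂ j) → Ω t₁ ≤ Ω t₂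
  submul : ∀ (k : Fin m → ℕ) (t : Fin m → ℝ), (∀ j, 1 ≤ k j) →
      Ω (fun j => (k j : ℝ) * t j) ≤ (∏ j, (k j : ℝ)) ^ l * Ω t
  cont : ContinuousOn Ω {t | ∀ j, 0 < t j}

/-- `t^{-α_j} Ω` almost increases in each variable on `(0,1]^m`. -/
def AlmostIncrOn {m : ℕ} (Ω : (Fin m → ℝ) → ℝ) (α : Fin m → ℝ) : Prop :=
  ∀ j, ∃ C : ℝ, 1 ≤ C ∧ ∀ t : Fin m → ℝ, (∀ i, t i ∈ Set.Ioc (0:ℝ) 1) →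
    ∀ t₁ t₂ : ℝ, t₁ ∈ Set.Ioc (0:ℝ) 1 → t₂ ∈ Set.Ioc (0:ℝ) 1 → t₁ ≤ t₂ →
      t₁ ^ (-(α j)) * Ω (Function.update t j t₁) ≤
        C * (t₂ ^ (-(α j)) * Ω (Function.update t j t₂))

/-- `t^{-α_j} Ω` almost decreases in each variable on `(0,1]^m`. -/
def AlmostDecrOn {m : ℕ} (Ω : (Fin m → ℝ) → ℝ) (α : Fin m → ℝ) : Prop :=
  ∀ j, ∃ C : ℝ, 1 ≤ C ∧ ∀ t : Fin m → ℝ, (∀ i, t i ∈ Set.Ioc (0:ℝ) 1) →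
    ∀ t₁ t₂ : ℝ, t₁ ∈ Set.Ioc (0:ℝ) 1 → t₂ ∈ Set.Ioc (0:ℝ) 1 → t₁ ≤ t₂ →
      t₂ ^ (-(α j)) * Ω (Function.update t j t₂) ≤
        C * (t₁ ^ (-(α j)) * Ω (Function.update t j t₁))

/-- Condition (S). -/
def CondS {m : ℕ} (Ω : (Fin m → ℝ) → ℝ) : Prop :=
  ∃ α : Fin m → ℝ, (∀ j, α j ∈ Set.Ioo (0:ℝ) 1) ∧ AlmostIncrOn Ω α

/-- Condition (S_l). -/
def CondSl {m : ℕ} (l : ℕ) (Ω : (Fin m → ℝ) → ℝ) : Prop :=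
  ∃ α : Fin m → ℝ, (∀ j, α j ∈ Set.Ioo (0:ℝ) (l : ℝ)) ∧ AlmostDecrOn Ω α

/-- The fundamental cube `(0, 2π]^m`. -/
def cube (m : ℕ) : Set (Fin m → ℝ) := Set.univ.pi fun _ => Set.Ioc 0 (2 * π)

/-- `e^{i⟨k,x⟩}`. -/
def expk {m : ℕ} (k : Fin m → ℤ) (x : Fin m → ℝ) : ℂ :=
  Complex.exp (Complex.I * ∑ j, (k j : ℂ) * (x j : ℂ))

/-- Fourier coefficient of a `2π`-periodic function of `m` variables. -/
def fCoeff {m : ℕ} (f : (Fin m → ℝ) → ℂ) (n : Fin m → ℤ) : ℂ :=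
  ((1 / (2 * π)) ^ m : ℝ) * ∫ x in cube m, f x * Complex.exp (-(Complex.I * ∑ j, (n j : ℂ) * (x j : ℂ)))

/-- The dyadic block `ρ(s) = { k : 2^{s_j-1} ≤ |k_j| < 2^{s_j} }`. -/
def rho {m : ℕ} (s : Fin m → ℕ) : Set (Fin m → ℤ) :=
  {k | ∀ j, 2 ^ (s j - 1) ≤ (k j).natAbs ∧ (k j).natAbs < 2 ^ (s j)}

/-- The dyadic block of the Fourier series of `f`. -/
def deltaBlock {m : ℕ} (f : (Fin m → ℝ) → ℂ) (s : Fin m → ℕ) : (Fin m → ℝ) → ℂ :=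
  fun x => ∑' k : rho s, fCoeff f k.1 * expk k.1 x

/-- `Q(Ω,N) = ⋃_{s ∈ Γ(Ω,N)} ρ(s)`. -/
def QSet {m : ℕ} (Ω : (Fin m → ℝ) → ℝ) (N : ℝ) : Set (Fin m → ℤ) :=
  ⋃ s ∈ Gam Ω N, rho s

/-- The partial Fourier sum over a set of frequencies. -/
def partialSum {m : ℕ} (E : Set (Fin m → ℤ)) (f : (Fin m → ℝ) → ℂ) : (Fin m → ℝ) → ℂ :=
  fun x => ∑' k : E, fCoeff f k.1 * expk k.1 x

/-- Non-increasing rearrangement of `|g|` on `[0,2π]`. -/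
def rearr (g : ℝ → ℂ) (t : ℝ) : ℝ :=
  sInf {y : ℝ | 0 ≤ y ∧ (volume {x ∈ Set.Ioc (0:ℝ) (2 * π) | y < ‖g x‖}).toReal ≤ t}

/-- One-variable Lorentz norm. -/
def lorentzNorm (p θ : ℝ) (g : ℝ → ℂ) : ℝ :=
  (∫ t in Set.Ioc (0:ℝ) (2 * π), rearr g t ^ θ * t ^ (θ / p - 1)) ^ (1 / θ)

/-- Lorentz mixed norm: one-variable Lorentz norm iterated over the variables. -/
def mixedLorentz : (m : ℕ) → (Fin m → ℝ) → (Fin m → ℝ) → ((Fin m → ℝ) → ℂ) → ℝ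
  | 0, _, _, f => ‖f (fun i => i.elim0)‖
  | m + 1, p, θ, f =>
      mixedLorentz m (fun j => p j.succ) (fun j => θ j.succ)
        (fun x => ((lorentzNorm (p 0) (θ 0) (fun t => f (Fin.cons t x)) : ℝ) : ℂ))

/-- Lebesgue mixed norm. -/
def mixedLp : (m : ℕ) → (Fin m → ℝ) → ((Fin m → ℝ) → ℂ) → ℝ
  | 0, _, f => ‖f (fun i => i.elim0)‖
  | m + 1, p, f =>
      mixedLp m (fun j => p j.succ)
        (fun x => (((∫ t in Set.Ioc (0:ℝ) (2 * π),
            ‖f (Fin.cons t x)‖ ^ (p 0)) ^ (1 / p 0) : ℝ) : ℂ))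

/-- `2π`-periodicity in each variable. -/
def PeriodicAll {m : ℕ} (f : (Fin m → ℝ) → ℂ) : Prop :=
  ∀ (x : Fin m → ℝ) (j : Fin m), f (Function.update x j (x j + 2 * π)) = f x

/-- Zero mean in each variable. -/
def ZeroMeanAll {m : ℕ} (f : (Fin m → ℝ) → ℂ) : Prop :=
  ∀ (x : Fin m → ℝ) (j : Fin m),
    (∫ t in Set.Ioc (0:ℝ) (2 * π), f (Function.update x j t)) = 0

/-- Membership in the generalized Nikol'skii–Besov class with mixed Lebesgue norm. -/
def InBesovLp {m : ℕ} (Ω : (Fin m → ℝ) → ℝ) (p τ : Fin m → ℝ)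
    (f : (Fin m → ℝ) → ℂ) : Prop :=
  Measurable f ∧ PeriodicAll f ∧ ZeroMeanAll f ∧ IntegrableOn f (cube m) ∧
    mixedSeqNorm m τ (fun s => (Ω (negTwoPow s))⁻¹ * mixedLp m p (deltaBlock f s)) ≤ 1

/-- Membership in the generalized Nikol'skii–Besov class with Lorentz mixed norm. -/
def InBesovLorentz {m : ℕ} (Ω : (Fin m → ℝ) → ℝ) (p θ τ : Fin m → ℝ)
    (f : (Fin m → ℝ) → ℂ) : Prop :=
  Measurable f ∧ PeriodicAll f ∧ ZeroMeanAll f ∧ IntegrableOn f (cube m) ∧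
    mixedSeqNorm m τ (fun s => (Ω (negTwoPow s))⁻¹ * mixedLorentz m p θ (deltaBlock f s)) ≤ 1

end


lemma aux_summable {f : ℕ → ℝ} (h : (Function.support f).Finite) : Summable f :=
  summable_of_ne_finset_zero (s := h.toFinset)
    (by intro b hb; by_contra hfb; exact hb (h.mem_toFinset.2 hfb))

lemma mixedSeqNorm_nonneg : ∀ (m : ℕ) (τ : Fin m → ℝ) (a : (Fin m → ℕ) → ℝ),
    0 ≤ mixedSeqNorm m τ a
  | 0, _, a => abs_nonneg _
  | m + 1, τ, a => mixedSeqNorm_nonneg m _ _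

lemma mixedSeqNorm_mono (m : ℕ) : ∀ (τ : Fin m → ℝ), (∀ j, 1 ≤ τ j) →
    ∀ (a b : (Fin m → ℕ) → ℝ), (∀ s, |a s| ≤ |b s|) → (Function.support b).Finite →
    mixedSeqNorm m τ a ≤ mixedSeqNorm m τ b := by
  induction m with
  | zero => intro τ _ a b hab _; exact hab _
  | succ m ih =>
    intro τ hτ a b hab hb
    have hτ0 : 0 < τ 0 := lt_of_lt_of_le one_pos (hτ 0)
    rw [mixedSeqNorm, mixedSeqNorm]
    have hsupp : ∀ s : Fin m → ℕ,
        (Function.support fun k : ℕ => |b (Fin.cons k s)| ^ τ 0).Finite := by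
      intro s
      apply Set.Finite.subset (hb.preimage (f := fun k : ℕ => Fin.cons k s)
        (Set.injOn_of_injective (fun k₁ k₂ h => by
          have := congrFun h 0; simpa using this)))
      intro k hk
      simp only [Function.mem_support, ne_eq] at hk ⊢
      intro hbz
      exact hk (by rw [hbz, abs_zero, Real.zero_rpow hτ0.ne'])
    have hBsum : ∀ s, Summable fun k : ℕ => |b (Fin.cons k s)| ^ τ 0 :=
      fun s => aux_summable (hsupp s)
    have hASum : ∀ s, Summable fun k : ℕ => |a (Fin.cons k s)| ^ τ 0 := by
      intro s
      exact Summable.of_nonneg_of_le (fun k => Real.rpow_nonneg (abs_nonneg _) _)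
        (fun k => Real.rpow_le_rpow (abs_nonneg _) (hab _) hτ0.le) (hBsum s)
    apply ih _ (fun j => hτ j.succ)
    · intro s
      have h1 : (0:ℝ) ≤ (∑' k : ℕ, |a (Fin.cons k s)| ^ τ 0) ^ (1 / τ 0) :=
        Real.rpow_nonneg (tsum_nonneg fun k => Real.rpow_nonneg (abs_nonneg _) _) _
      have h2 : (0:ℝ) ≤ (∑' k : ℕ, |b (Fin.cons k s)| ^ τ 0) ^ (1 / τ 0) :=
        Real.rpow_nonneg (tsum_nonneg fun k => Real.rpow_nonneg (abs_nonneg _) _) _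
      rw [abs_of_nonneg h1, abs_of_nonneg h2]
      apply Real.rpow_le_rpow
        (tsum_nonneg fun k => Real.rpow_nonneg (abs_nonneg _) _)
        (Summable.tsum_le_tsum (fun k => Real.rpow_le_rpow (abs_nonneg _) (hab _) hτ0.le)
          (hASum s) (hBsum s))
        (by positivity)
    · apply Set.Finite.subset (hb.image Fin.tail)
      intro s hs
      simp only [Function.mem_support, ne_eq] at hs
      by_contra hmem
      apply hs
      have hz : ∀ k : ℕ, b (Fin.cons k s) = 0 := by
        intro k
        by_contra hk
        exact hmem ⟨Fin.cons k s, hk, by funext i; simp⟩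
      have : (fun k : ℕ => |b (Fin.cons k s)| ^ τ 0) = fun _ => 0 := by
        funext k; rw [hz k, abs_zero, Real.zero_rpow hτ0.ne']
      rw [this, tsum_zero, Real.zero_rpow (by positivity)]

lemma mixedSeqNorm_smul (m : ℕ) : ∀ (τ : Fin m → ℝ), (∀ j, 1 ≤ τ j) →
    ∀ (c : ℝ), 0 ≤ c → ∀ a : (Fin m → ℕ) → ℝ,
    mixedSeqNorm m τ (fun s => c * a s) = c * mixedSeqNorm m τ a := by
  induction m with
  | zero => intro τ _ c hc a; simp [mixedSeqNorm, abs_mul, abs_of_nonneg hc]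
  | succ m ih =>
    intro τ hτ c hc a
    have hτ0 : 0 < τ 0 := lt_of_lt_of_le one_pos (hτ 0)
    rw [mixedSeqNorm, mixedSeqNorm]
    have key : (fun s : Fin m → ℕ =>
        (∑' k : ℕ, |c * a (Fin.cons k s)| ^ τ 0) ^ (1 / τ 0)) =
        fun s => c * (∑' k : ℕ, |a (Fin.cons k s)| ^ τ 0) ^ (1 / τ 0) := by
      funext s
      have h1 : (fun k : ℕ => |c * a (Fin.cons k s)| ^ τ 0) =
          fun k => c ^ τ 0 * |a (Fin.cons k s)| ^ τ 0 := by
        funext k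
        rw [abs_mul, abs_of_nonneg hc, Real.mul_rpow hc (abs_nonneg _)]
      rw [h1, tsum_mul_left,
        Real.mul_rpow (Real.rpow_nonneg hc _)
          (tsum_nonneg fun k => Real.rpow_nonneg (abs_nonneg _) _),
        ← Real.rpow_mul hc, mul_one_div_cancel hτ0.ne', Real.rpow_one]
    rw [key]
    exact ih _ (fun j => hτ j.succ) c hc _

lemma finite_sum_le (m n : ℕ) : {s : Fin m → ℕ | (∑ j, s j) ≤ n}.Finite := by
  apply Set.Finite.subset (Set.Finite.pi (fun j : Fin m => Set.finite_Icc 0 n))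
  intro s hs
  simp only [Set.mem_pi, Set.mem_univ, Set.mem_Icc, forall_true_left]
  intro j
  refine ⟨Nat.zero_le _, le_trans ?_ hs⟩
  exact Finset.single_le_sum (fun i _ => Nat.zero_le _) (Finset.mem_univ j)

lemma Fbound (m : ℕ) : ∀ (τ : Fin m → ℝ), (∀ j, 1 ≤ τ j) →
    ∃ c C : ℝ, 0 < c ∧ 0 < C ∧ ∀ n : ℕ,
      c * ((n : ℝ) + 1) ^ (∑ j, 1 / τ j) ≤
        mixedSeqNorm m τ (fun s => if (∑ j, s j) ≤ n then 1 else 0) ∧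
      mixedSeqNorm m τ (fun s => if (∑ j, s j) ≤ n then 1 else 0) ≤
        C * ((n : ℝ) + 1) ^ (∑ j, 1 / τ j) := by
  induction m with
  | zero =>
    intro τ _
    refine ⟨1, 1, one_pos, one_pos, fun n => ?_⟩
    have h0 : mixedSeqNorm 0 τ (fun s => if (∑ j, s j) ≤ n then (1:ℝ) else 0) = 1 := by
      rw [mixedSeqNorm]; simp
    rw [h0]
    simp
  | succ m ih =>
    intro τ hτ
    obtain ⟨c, C, hc, hC, hF⟩ := ih (fun j => τ j.succ) (fun j => hτ j.succ)
    have hτ0 : 0 < τ 0 := lt_of_lt_of_le one_pos (hτ 0)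
    have hτ0' : (0:ℝ) ≤ 1 / τ 0 := by positivity
    set σ' : ℝ := ∑ j : Fin m, 1 / τ j.succ with hσ'
    have hσ'0 : 0 ≤ σ' := Finset.sum_nonneg fun j _ => by
      have := hτ j.succ; positivity
    set σ : ℝ := ∑ j : Fin (m+1), 1 / τ j with hσ
    have hσsplit : σ = 1 / τ 0 + σ' := by
      rw [hσ, Fin.sum_univ_succ]
    have h2σ : (0:ℝ) < 2 ^ σ := Real.rpow_pos_of_pos two_pos _
    refine ⟨c / 2 ^ σ, C, by positivity, hC, fun n => ?_⟩
    -- unfold one level and compute the inner function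
    have key : mixedSeqNorm (m+1) τ
        (fun s => if (∑ j, s j) ≤ n then 1 else 0) =
        mixedSeqNorm m (fun j => τ j.succ)
          (fun s => if (∑ j, s j) ≤ n
            then ((n - ∑ j, s j + 1 : ℕ) : ℝ) ^ (1 / τ 0) else 0) := by
      rw [mixedSeqNorm]
      congr 1
      funext s
      set T := ∑ j, s j with hT
      have hterm : ∀ k : ℕ,
          |if (∑ j, Fin.cons k s j) ≤ n then (1:ℝ) else 0| ^ τ 0 =
          if k + T ≤ n then 1 else 0 := by
        intro k
        rw [Fin.sum_cons]
        split <;> simp [Real.zero_rpow hτ0.ne']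
      simp only [hterm]
      by_cases hTn : T ≤ n
      · rw [tsum_eq_sum (s := Finset.range (n - T + 1))
          (by intro k hk; simp only [Finset.mem_range, not_lt] at hk
              rw [if_neg]; omega)]
        have : ∀ k ∈ Finset.range (n - T + 1),
            (if k + T ≤ n then (1:ℝ) else 0) = 1 := by
          intro k hk; simp only [Finset.mem_range] at hk; rw [if_pos]; omega
        rw [Finset.sum_congr rfl this, Finset.sum_const, Finset.card_range,
          nsmul_eq_mul, mul_one, if_pos hTn]
      · have : ∀ k : ℕ, (if k + T ≤ n then (1:ℝ) else 0) = 0 := by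
          intro k; rw [if_neg]; omega
        simp only [this, tsum_zero, if_neg hTn]
        exact Real.zero_rpow (by positivity)
    rw [key]
    constructor
    · -- lower bound
      have hle : mixedSeqNorm m (fun j => τ j.succ)
          (fun s => (((n:ℝ)+1)/2) ^ (1/τ 0) * (if (∑ j, s j) ≤ n/2 then 1 else 0)) ≤
          mixedSeqNorm m (fun j => τ j.succ)
            (fun s => if (∑ j, s j) ≤ n
              then ((n - ∑ j, s j + 1 : ℕ) : ℝ) ^ (1 / τ 0) else 0) := by
        apply mixedSeqNorm_mono m _ (fun j => hτ j.succ)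
        · intro s
          set T := ∑ j, s j with hT
          by_cases hT2 : T ≤ n / 2
          · have hTn : T ≤ n := le_trans hT2 (Nat.div_le_self n 2)
            rw [if_pos hT2, if_pos hTn, mul_one,
              abs_of_nonneg (Real.rpow_nonneg (by positivity) _),
              abs_of_nonneg (Real.rpow_nonneg (Nat.cast_nonneg _) _)]
            apply Real.rpow_le_rpow (by positivity) _ hτ0'
            have h1 : n + 1 ≤ 2 * (n - T + 1) := by omega
            have h2 : ((n:ℝ) + 1) ≤ 2 * ((n - T + 1 : ℕ) : ℝ) := by
              exact_mod_cast h1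
            linarith
          · rw [if_neg hT2, mul_zero, abs_zero]
            exact abs_nonneg _
        · apply Set.Finite.subset (finite_sum_le m n)
          intro s hs
          simp only [Function.mem_support, ne_eq] at hs
          by_contra hsn
          simp only [Set.mem_setOf_eq, not_le] at hsn
          exact hs (by rw [if_neg (by omega)])
      refine le_trans ?_ hle
      rw [mixedSeqNorm_smul m _ (fun j => hτ j.succ) _ (by positivity)]
      have hF2 := (hF (n/2)).1
      have hhalf : ((n:ℝ)+1)/2 ≤ ((n/2 : ℕ) : ℝ) + 1 := by
        have : n + 1 ≤ 2 * (n/2 + 1) := by omega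
        have := (by exact_mod_cast this : ((n:ℝ)+1) ≤ 2 * (((n/2:ℕ):ℝ) + 1))
        linarith
      have hstep : c * (((n:ℝ)+1)/2) ^ σ' ≤
          c * (((n/2 : ℕ) : ℝ) + 1) ^ σ' :=
        mul_le_mul_of_nonneg_left
          (Real.rpow_le_rpow (by positivity) hhalf hσ'0) hc.le
      have e1 : (((n:ℝ)+1)/2) ^ (1/τ 0) * (((n:ℝ)+1)/2) ^ σ' = (((n:ℝ)+1)/2) ^ σ := by
        rw [hσsplit, Real.rpow_add (by positivity : (0:ℝ) < ((n:ℝ)+1)/2)]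
      have e2 : (((n:ℝ)+1)/2) ^ σ = ((n:ℝ)+1) ^ σ / 2 ^ σ :=
        Real.div_rpow (by positivity) (by norm_num) _
      calc c / 2 ^ σ * ((n:ℝ)+1) ^ σ
          = (((n:ℝ)+1)/2) ^ (1/τ 0) * (c * (((n:ℝ)+1)/2) ^ σ') := by
            rw [show (((n:ℝ)+1)/2) ^ (1/τ 0) * (c * (((n:ℝ)+1)/2) ^ σ')
                = c * ((((n:ℝ)+1)/2) ^ (1/τ 0) * (((n:ℝ)+1)/2) ^ σ') from by ring,
              e1, e2]
            ring
        _ ≤ (((n:ℝ)+1)/2) ^ (1/τ 0) * (c * (((n/2:ℕ):ℝ) + 1) ^ σ') := by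
            apply mul_le_mul_of_nonneg_left hstep (by positivity)
        _ ≤ (((n:ℝ)+1)/2) ^ (1/τ 0) * mixedSeqNorm m (fun j => τ j.succ)
              (fun s => if (∑ j, s j) ≤ n/2 then 1 else 0) := by
            apply mul_le_mul_of_nonneg_left hF2 (by positivity)
    · -- upper bound
      have hle : mixedSeqNorm m (fun j => τ j.succ)
          (fun s => if (∑ j, s j) ≤ n
            then ((n - ∑ j, s j + 1 : ℕ) : ℝ) ^ (1 / τ 0) else 0) ≤
          mixedSeqNorm m (fun j => τ j.succ)
            (fun s => ((n:ℝ)+1) ^ (1/τ 0) * (if (∑ j, s j) ≤ n then 1 else 0)) := by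
        apply mixedSeqNorm_mono m _ (fun j => hτ j.succ)
        · intro s
          set T := ∑ j, s j with hT
          by_cases hTn : T ≤ n
          · rw [if_pos hTn, if_pos hTn, mul_one,
              abs_of_nonneg (Real.rpow_nonneg (Nat.cast_nonneg _) _),
              abs_of_nonneg (Real.rpow_nonneg (by positivity) _)]
            apply Real.rpow_le_rpow (Nat.cast_nonneg _) _ hτ0'
            have : (n - T + 1 : ℕ) ≤ n + 1 := by omega
            exact_mod_cast (by exact_mod_cast this : ((n-T+1:ℕ):ℝ) ≤ ((n+1:ℕ):ℝ))
          · simp [if_neg hTn]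
        · apply Set.Finite.subset (finite_sum_le m n)
          intro s hs
          simp only [Function.mem_support, ne_eq] at hs
          by_contra hsn
          simp only [Set.mem_setOf_eq, not_le] at hsn
          exact hs (by rw [if_neg (by omega), mul_zero])
      refine le_trans hle ?_
      rw [mixedSeqNorm_smul m _ (fun j => hτ j.succ) _ (by positivity)]
      calc ((n:ℝ)+1) ^ (1/τ 0) * mixedSeqNorm m (fun j => τ j.succ)
            (fun s => if (∑ j, s j) ≤ n then 1 else 0)
          ≤ ((n:ℝ)+1) ^ (1/τ 0) * (C * ((n:ℝ)+1) ^ σ') :=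
            mul_le_mul_of_nonneg_left (hF n).2 (by positivity)
        _ = C * ((n:ℝ)+1) ^ σ := by
            rw [hσsplit, Real.rpow_add (by positivity : (0:ℝ) < (n:ℝ)+1)]
            ring

/-- mixed `ℓ_τ̄`-norm of the indicator of `ϰ(n) = {s : Σ s_j = n}`
is `≍ n^{Σ_{j=2}^m 1/τ_j}`. -/
theorem stmt0 (m : ℕ) (τ : Fin (m + 1) → ℝ) (hτ : ∀ j, 1 ≤ τ j) :
    ∃ C₁ C₂ : ℝ, 0 < C₁ ∧ 0 < C₂ ∧ ∀ n : ℕ, 1 ≤ n →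
      C₁ * (n : ℝ) ^ (∑ j ∈ Finset.univ.erase (0 : Fin (m + 1)), 1 / τ j) ≤
        mixedSeqNorm (m + 1) τ (fun s => if (∑ j, s j) = n then 1 else 0) ∧
      mixedSeqNorm (m + 1) τ (fun s => if (∑ j, s j) = n then 1 else 0) ≤
        C₂ * (n : ℝ) ^ (∑ j ∈ Finset.univ.erase (0 : Fin (m + 1)), 1 / τ j) := by
  obtain ⟨c, C, hc, hC, hF⟩ := Fbound m (fun j => τ j.succ) (fun j => hτ j.succ)
  have hσ'0 : 0 ≤ ∑ j : Fin m, 1 / τ j.succ :=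
    Finset.sum_nonneg fun j _ => by have := hτ j.succ; positivity
  have herase : ∑ j ∈ Finset.univ.erase (0 : Fin (m + 1)), 1 / τ j =
      ∑ j : Fin m, 1 / τ j.succ := by
    have h1 := Fin.sum_univ_succ (fun j : Fin (m + 1) => 1 / τ j)
    have h2 := Finset.add_sum_erase Finset.univ (fun j : Fin (m + 1) => 1 / τ j)
      (Finset.mem_univ 0)
    linarith [h1, h2]
  have h2σ : (0:ℝ) < 2 ^ (∑ j : Fin m, 1 / τ j.succ) := Real.rpow_pos_of_pos two_pos _
  refine ⟨c, C * 2 ^ (∑ j : Fin m, 1 / τ j.succ), hc, by positivity, fun n hn => ?_⟩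
  have hτ0 : 0 < τ 0 := lt_of_lt_of_le one_pos (hτ 0)
  have hkey : mixedSeqNorm (m + 1) τ (fun s => if (∑ j, s j) = n then 1 else 0) =
      mixedSeqNorm m (fun j => τ j.succ)
        (fun s => if (∑ j, s j) ≤ n then 1 else 0) := by
    rw [mixedSeqNorm]
    congr 1
    funext s
    set T := ∑ j, s j with hT
    have hterm : ∀ k : ℕ, |if (∑ j, Fin.cons k s j) = n then (1:ℝ) else 0| ^ τ 0
        = if k + T = n then 1 else 0 := by
      intro k; rw [Fin.sum_cons]; split <;> simp [Real.zero_rpow hτ0.ne']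
    simp only [hterm]
    by_cases hTn : T ≤ n
    · have he : ∀ k : ℕ, (if k + T = n then (1:ℝ) else 0) =
          if k = n - T then 1 else 0 := by
        intro k
        by_cases h : k + T = n
        · rw [if_pos h, if_pos (by omega)]
        · rw [if_neg h, if_neg (by omega)]
      rw [tsum_congr he, tsum_ite_eq, if_pos hTn, Real.one_rpow]
    · have he : ∀ k : ℕ, (if k + T = n then (1:ℝ) else 0) = 0 := by
        intro k; rw [if_neg]; omega
      simp only [he, tsum_zero, if_neg hTn]
      exact Real.zero_rpow (by positivity)
  rw [hkey, herase]
  have hn1 : (1:ℝ) ≤ (n:ℝ) := by exact_mod_cast hn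
  constructor
  · calc c * (n:ℝ) ^ (∑ j : Fin m, 1 / τ j.succ)
        ≤ c * ((n:ℝ) + 1) ^ (∑ j : Fin m, 1 / τ j.succ) :=
          mul_le_mul_of_nonneg_left
            (Real.rpow_le_rpow (Nat.cast_nonneg n) (by linarith) hσ'0) hc.le
      _ ≤ _ := (hF n).1
  · calc mixedSeqNorm m (fun j => τ j.succ)
          (fun s => if (∑ j, s j) ≤ n then 1 else 0)
        ≤ C * ((n:ℝ) + 1) ^ (∑ j : Fin m, 1 / τ j.succ) := (hF n).2
      _ ≤ C * (2 * (n:ℝ)) ^ (∑ j : Fin m, 1 / τ j.succ) :=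
          mul_le_mul_of_nonneg_left
            (Real.rpow_le_rpow (by positivity) (by linarith) hσ'0) hC.le
      _ = C * 2 ^ (∑ j : Fin m, 1 / τ j.succ) * (n:ℝ) ^ (∑ j : Fin m, 1 / τ j.succ) := by
          rw [Real.mul_rpow (by norm_num) (Nat.cast_nonneg n)]; ring
end

section
/- Let Ω be a function of mixed modulus-of-continuity type of order l on (0,1]^m satisfying conditions (S) and (S_l). Then the set Λ(Ω,N) = Γ^⊥(Ω,N) \ Γ^⊥(Ω,2^l N) is nonempty for N large, and its cardinality satisfies |Λ(Ω,N)| ≍ (log₂ N)^{m-1}, i.e., there are positive constants C₁, C₂ with C₁ (log₂ N)^{m-1} ≤ |Λ(Ω,N)| ≤ C₂ (log₂ N)^{m-1} for all sufficiently large N. -/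
open scoped BigOperators ENNReal
open MeasureTheory Real Set

namespace Stmt3Aux

open Real

lemma ntp_mem {m : ℕ} (s : Fin m → ℕ) (j : Fin m) : negTwoPow s j ∈ Set.Ioc (0:ℝ) 1 := by
  unfold negTwoPow
  constructor
  · positivity
  · exact Real.rpow_le_one_of_one_le_of_nonpos one_le_two (by simp)

lemma omega_pos {m l : ℕ} {Ω : (Fin m → ℝ) → ℝ} (hΩ : IsMixedModulus l Ω)
    (s : Fin m → ℕ) : 0 < Ω (negTwoPow s) :=
  hΩ.pos _ fun j => (ntp_mem s j).1

lemma omega_anti {m l : ℕ} {Ω : (Fin m → ℝ) → ℝ} (hΩ : IsMixedModulus l Ω)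
    {s s' : Fin m → ℕ} (h : ∀ j, s j ≤ s' j) :
    Ω (negTwoPow s') ≤ Ω (negTwoPow s) := by
  refine hΩ.mono _ _ fun j => ?_
  exact Real.rpow_le_rpow_of_exponent_le one_le_two (by simpa using h j)

lemma step {m l : ℕ} {Ω : (Fin (m+1) → ℝ) → ℝ} (hΩ : IsMixedModulus l Ω)
    (s : Fin (m+1) → ℕ) (j : Fin (m+1)) :
    Ω (negTwoPow s) ≤ 2 ^ l * Ω (negTwoPow (Function.update s j (s j + 1))) := by
  have h := hΩ.submul (Function.update (fun _ => 1) j 2)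
      (negTwoPow (Function.update s j (s j + 1))) (by
        intro i
        by_cases hij : i = j
        · subst hij; simp
        · simp [Function.update_of_ne hij])
  have hprod : (∏ i, ((Function.update (fun _ => 1) j 2 i : ℕ) : ℝ)) = 2 := by
    rw [Finset.prod_eq_single_of_mem j (Finset.mem_univ j)]
    · simp
    · intro b _ hb; simp [Function.update_of_ne hb]
  have hfun : (fun i => ((Function.update (fun _ => 1) j 2 i : ℕ) : ℝ) *
      negTwoPow (Function.update s j (s j + 1)) i) = negTwoPow s := by
    funext i
    by_cases hij : i = j
    · subst hij
      simp only [Function.update_self, negTwoPow]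
      rw [show ((2:ℕ):ℝ) = (2:ℝ)^(1:ℝ) by norm_num, ← Real.rpow_add two_pos]
      congr 1
      push_cast; ring
    · simp [Function.update_of_ne hij, negTwoPow]
  rw [hfun, hprod] at h
  calc Ω (negTwoPow s) ≤ (2:ℝ)^(l:ℕ) * Ω (negTwoPow (Function.update s j (s j + 1))) := by
        simpa using h
    _ = 2 ^ l * Ω (negTwoPow (Function.update s j (s j + 1))) := by norm_num

lemma sum_lower_aux {m l : ℕ} {Ω : (Fin (m+1) → ℝ) → ℝ} (hΩ : IsMixedModulus l Ω) :
    ∀ (n : ℕ) (s : Fin (m+1) → ℕ), (∑ j, s j) = n →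
    (2:ℝ) ^ (-((l:ℝ) * n)) * Ω (negTwoPow (fun _ => 0)) ≤ Ω (negTwoPow s) := by
  intro n
  induction n with
  | zero =>
      intro s hs
      have : s = fun _ => 0 := by
        funext j
        exact (Finset.sum_eq_zero_iff.mp hs) j (Finset.mem_univ j)
      subst this
      simp
  | succ n ih =>
      intro s hs
      have hex : ∃ j, s j ≠ 0 := by
        by_contra h
        push_neg at h
        simp only [h, Finset.sum_const_zero] at hs
        exact Nat.succ_ne_zero n hs.symm
      obtain ⟨j, hj⟩ := hex
      set s' := Function.update s j (s j - 1) with hs'def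
      have hT : ∑ i ∈ Finset.univ.erase j, s i + s j = ∑ i, s i :=
        Finset.sum_erase_add _ _ (Finset.mem_univ j)
      have hsum' : (∑ i, s' i) = n := by
        have h2 : ∑ i ∈ Finset.univ.erase j, s' i + s' j = ∑ i, s' i :=
          Finset.sum_erase_add _ _ (Finset.mem_univ j)
        have h3 : ∑ i ∈ Finset.univ.erase j, s' i = ∑ i ∈ Finset.univ.erase j, s i := by
          refine Finset.sum_congr rfl fun i hi => ?_
          rw [hs'def, Function.update_of_ne (Finset.ne_of_mem_erase hi)]
        have h4 : s' j = s j - 1 := by rw [hs'def]; simp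
        omega
      have hupd : Function.update s' j (s' j + 1) = s := by
        funext i
        by_cases hij : i = j
        · subst hij
          simp [hs'def]
          omega
        · simp [hs'def, Function.update_of_ne hij]
      have hstep := step hΩ s' j
      rw [hupd] at hstep
      have hih := ih s' hsum'
      have h2l : (0:ℝ) < 2 ^ l := by positivity
      have key : (2:ℝ) ^ (-((l:ℝ) * ((n:ℝ)+1))) * Ω (negTwoPow (fun _ => 0))
          = (2:ℝ)^(-(l:ℝ)) * ((2:ℝ) ^ (-((l:ℝ) * n)) * Ω (negTwoPow (fun _ => 0))) := by
        rw [← mul_assoc, ← Real.rpow_add two_pos]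
        ring_nf
      have hinv : (2:ℝ)^(-(l:ℝ)) = ((2:ℝ)^l)⁻¹ := by
        rw [Real.rpow_neg (by norm_num), Real.rpow_natCast]
      have hgoal : (2:ℝ) ^ (-((l:ℝ) * ((n:ℕ)+1:ℕ))) * Ω (negTwoPow (fun _ => 0))
          ≤ Ω (negTwoPow s) := by
        push_cast
        rw [key, hinv]
        have h1 : ((2:ℝ)^l)⁻¹ * ((2:ℝ) ^ (-((l:ℝ) * n)) * Ω (negTwoPow (fun _ => 0)))
            ≤ ((2:ℝ)^l)⁻¹ * Ω (negTwoPow s') :=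
          mul_le_mul_of_nonneg_left hih (by positivity)
        have h2 : ((2:ℝ)^l)⁻¹ * Ω (negTwoPow s') ≤ ((2:ℝ)^l)⁻¹ * (2^l * Ω (negTwoPow s)) :=
          mul_le_mul_of_nonneg_left hstep (by positivity)
        have h3 : ((2:ℝ)^l)⁻¹ * (2^l * Ω (negTwoPow s)) = Ω (negTwoPow s) := by
          field_simp
        linarith
      exact hgoal

lemma decay {m : ℕ} {Ω : (Fin (m+1) → ℝ) → ℝ} {j : Fin (m+1)} {C αj : ℝ}
    (h : ∀ t : Fin (m+1) → ℝ, (∀ i, t i ∈ Set.Ioc (0:ℝ) 1) →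
      ∀ t₁ t₂ : ℝ, t₁ ∈ Set.Ioc (0:ℝ) 1 → t₂ ∈ Set.Ioc (0:ℝ) 1 → t₁ ≤ t₂ →
        t₁ ^ (-αj) * Ω (Function.update t j t₁) ≤
          C * (t₂ ^ (-αj) * Ω (Function.update t j t₂)))
    (s : Fin (m+1) → ℕ) (n : ℕ) :
    Ω (negTwoPow (Function.update s j (s j + n)))
      ≤ C * (2:ℝ) ^ (-(n:ℝ) * αj) * Ω (negTwoPow s) := by
  set t : Fin (m+1) → ℝ := negTwoPow s with ht
  set t₁ : ℝ := (2:ℝ) ^ (-((s j : ℝ) + n)) with ht₁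
  have ht₁mem : t₁ ∈ Set.Ioc (0:ℝ) 1 := by
    constructor
    · positivity
    · refine Real.rpow_le_one_of_one_le_of_nonpos one_le_two (neg_nonpos.mpr (by positivity))
  have ht₂mem : t j ∈ Set.Ioc (0:ℝ) 1 := ntp_mem s j
  have hle : t₁ ≤ t j := by
    have : t j = (2:ℝ) ^ (-(s j : ℝ)) := rfl
    rw [this, ht₁]
    apply Real.rpow_le_rpow_of_exponent_le one_le_two
    have : (0:ℝ) ≤ (n:ℝ) := Nat.cast_nonneg n
    linarith
  have hkey := h t (fun i => ntp_mem s i) t₁ (t j) ht₁mem ht₂mem hle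
  rw [Function.update_eq_self] at hkey
  have hupd : Function.update t j t₁ = negTwoPow (Function.update s j (s j + n)) := by
    funext i
    by_cases hij : i = j
    · subst hij
      simp only [Function.update_self, ht₁, negTwoPow]
      congr 1
      push_cast; ring
    · simp [Function.update_of_ne hij, ht, negTwoPow]
  rw [hupd] at hkey
  have e1 : t₁ ^ (-αj) = (2:ℝ) ^ (((s j : ℝ) + n) * αj) := by
    rw [ht₁, ← Real.rpow_mul (by norm_num : (0:ℝ) ≤ 2)]
    ring_nf
  have e2 : (t j) ^ (-αj) = (2:ℝ) ^ ((s j : ℝ) * αj) := by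
    have : t j = (2:ℝ) ^ (-(s j : ℝ)) := rfl
    rw [this, ← Real.rpow_mul (by norm_num : (0:ℝ) ≤ 2)]
    ring_nf
  rw [e1, e2] at hkey
  have hpos : (0:ℝ) < (2:ℝ) ^ (((s j : ℝ) + n) * αj) := by positivity
  have h3 : Ω (negTwoPow (Function.update s j (s j + n)))
      ≤ (C * ((2:ℝ) ^ ((s j : ℝ) * αj) * Ω (negTwoPow s))) / (2:ℝ) ^ (((s j : ℝ) + n) * αj) := by
    rw [le_div_iff₀ hpos]
    calc Ω (negTwoPow (Function.update s j (s j + n))) * (2:ℝ) ^ (((s j : ℝ) + n) * αj)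
        = (2:ℝ) ^ (((s j : ℝ) + n) * αj) * Ω (negTwoPow (Function.update s j (s j + n))) := by ring
      _ ≤ C * ((2:ℝ) ^ ((s j : ℝ) * αj) * Ω t) := hkey
      _ = C * ((2:ℝ) ^ ((s j : ℝ) * αj) * Ω (negTwoPow s)) := by rw [ht]
  refine h3.trans (le_of_eq ?_)
  have e3 : (2:ℝ) ^ ((s j : ℝ) * αj)
      = (2:ℝ) ^ (((s j : ℝ) + n) * αj) * (2:ℝ) ^ (-(n:ℝ) * αj) := by
    rw [← Real.rpow_add two_pos]
    ring_nf
  rw [e3]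
  field_simp
  ring

end Stmt3Aux



set_option maxHeartbeats 2000000 in
/-- `Λ(Ω,N)` is nonempty for large `N` and `|Λ(Ω,N)| ≍ (log₂ N)^{m-1}`. -/
theorem stmt3 (m l : ℕ) (Ω : (Fin (m + 1) → ℝ) → ℝ)
    (hΩ : IsMixedModulus l Ω) (hS : CondS Ω) (hSl : CondSl l Ω) :
    ∃ C₁ C₂ : ℝ, 0 < C₁ ∧ 0 < C₂ ∧ ∃ N₀ : ℝ, ∀ N : ℝ, N₀ ≤ N →
      (Lam Ω l N).Nonempty ∧
      C₁ * Real.logb 2 N ^ (m : ℝ) ≤ ((Lam Ω l N).ncard : ℝ) ∧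
      ((Lam Ω l N).ncard : ℝ) ≤ C₂ * Real.logb 2 N ^ (m : ℝ) := by
  classical
  obtain ⟨α, hα, hAI⟩ := hS
  choose Cf hCf1 hCf2 using hAI
  obtain ⟨β, hβ, -⟩ := hSl
  have hl1 : 1 ≤ l := by
    rcases Nat.eq_zero_or_pos l with h | h
    · exfalso
      have h1 := (hβ 0).1
      have h2 := (hβ 0).2
      rw [h] at h2
      push_cast at h2
      linarith
    · exact h
  set ω0 : ℝ := Ω (negTwoPow (fun _ : Fin (m+1) => 0)) with hω0
  have hω0pos : 0 < ω0 := Stmt3Aux.omega_pos hΩ _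
  have hFinNe : (Finset.univ : Finset (Fin (m+1))).Nonempty := Finset.univ_nonempty
  set a : ℝ := Finset.univ.inf' hFinNe α with ha
  have hapos : 0 < a := by
    rw [ha, Finset.lt_inf'_iff]
    intro j _
    exact (hα j).1
  have hale : ∀ j, a ≤ α j := fun j => Finset.inf'_le _ (Finset.mem_univ j)
  set Cm : ℝ := Finset.univ.sup' hFinNe Cf with hCm
  have hCm1 : 1 ≤ Cm := le_trans (hCf1 0) (Finset.le_sup' _ (Finset.mem_univ 0))
  have hCmle : ∀ j, Cf j ≤ Cm := fun j => Finset.le_sup' _ (Finset.mem_univ j)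
  have hCmpos : 0 < Cm := lt_of_lt_of_le one_pos hCm1
  set K₀ : ℕ := ⌈((l:ℝ) + Real.logb 2 (Cf 0)) / α 0⌉₊ with hK₀
  set E : ℝ := max 1 (max (Real.logb 2 (Cm * ω0 * 2^l)) (-2 * Real.logb 2 ω0)) with hE
  refine ⟨((2*((m:ℝ)*l+1))⁻¹)^m, ((K₀:ℝ)+1) * (2/a+1)^m, by positivity, by positivity,
    (2:ℝ)^E, ?_⟩
  intro N hN
  set L : ℝ := Real.logb 2 N with hL
  have hN2 : (2:ℝ) ≤ N := by
    calc (2:ℝ) = 2^(1:ℝ) := by norm_num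
      _ ≤ 2^E := Real.rpow_le_rpow_of_exponent_le one_le_two (le_max_left _ _)
      _ ≤ N := hN
  have hNpos : (0:ℝ) < N := by linarith
  have hLE : E ≤ L := by
    rw [hL, show E = Real.logb 2 ((2:ℝ)^E) from (Real.logb_rpow two_pos (by norm_num)).symm]
    exact Real.logb_le_logb_of_le one_lt_two (by positivity) hN
  have hL1 : 1 ≤ L := le_trans (le_max_left _ _) hLE
  have hLpos : 0 < L := by linarith
  have hNL : (2:ℝ) ^ L = N := Real.rpow_logb two_pos (by norm_num) hNpos
  have h2lN : (0:ℝ) < 2^l * N := by positivity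
  -- membership characterization
  have hmem : ∀ s : Fin (m+1) → ℕ, s ∈ Lam Ω l N ↔
      (Ω (negTwoPow s) < 1/N ∧ 1/(2^l*N) ≤ Ω (negTwoPow s)) := by
    intro s
    simp only [Lam, GamPerp, Gam, Set.mem_diff, Set.mem_compl_iff, Set.mem_setOf_eq, not_le,
      not_not, not_lt]
  -- U1: coordinate bound for elements of Λ
  have hU1 : ∀ s ∈ Lam Ω l N, ∀ j, (s j : ℝ) ≤ 2*L/a := by
    intro s hs j
    have h2 := ((hmem s).1 hs).2
    have hbase := Stmt3Aux.decay (hCf2 j) (Function.update s j 0) (s j)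
    have hupd : Function.update (Function.update s j 0) j
        (Function.update s j 0 j + s j) = s := by
      funext i
      by_cases hij : i = j
      · subst hij; simp
      · simp [Function.update_of_ne hij]
    rw [hupd] at hbase
    have hmono : Ω (negTwoPow (Function.update s j 0)) ≤ ω0 := by
      rw [hω0]
      exact Stmt3Aux.omega_anti hΩ (fun i => Nat.zero_le _)
    have h2p : (0:ℝ) < (2:ℝ)^(-(s j:ℝ)*α j) := by positivity
    have h4 : Ω (negTwoPow s) ≤ Cm * (2:ℝ)^(-(s j:ℝ)*α j) * ω0 := by
      calc Ω (negTwoPow s) ≤ Cf j * (2:ℝ)^(-(s j:ℝ)*α j) * Ω (negTwoPow (Function.update s j 0)) :=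
            hbase
        _ ≤ Cm * (2:ℝ)^(-(s j:ℝ)*α j) * ω0 := by
            apply mul_le_mul
            · exact mul_le_mul_of_nonneg_right (hCmle j) h2p.le
            · exact hmono
            · exact le_of_lt (Stmt3Aux.omega_pos hΩ _)
            · positivity
    set X : ℝ := (2:ℝ)^((s j:ℝ)*α j) with hX
    have hXpos : 0 < X := by positivity
    have hXX : (2:ℝ)^(-(s j:ℝ)*α j) * X = 1 := by
      rw [hX, ← Real.rpow_add two_pos]
      ring_nf
      simp
    have h6 : 1/(2^l*N) ≤ Cm * (2:ℝ)^(-(s j:ℝ)*α j) * ω0 := le_trans h2 h4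
    have h7 : X / (2^l*N) ≤ Cm*ω0 := by
      calc X/(2^l*N) = (1/(2^l*N))*X := by ring
        _ ≤ (Cm * (2:ℝ)^(-(s j:ℝ)*α j) * ω0)*X := mul_le_mul_of_nonneg_right h6 hXpos.le
        _ = Cm*ω0*((2:ℝ)^(-(s j:ℝ)*α j)*X) := by ring
        _ = Cm*ω0 := by rw [hXX]; ring
    have h8 : X ≤ Cm*ω0*(2^l*N) := by
      rw [div_le_iff₀ h2lN] at h7
      linarith
    have h9 : (s j:ℝ)*α j ≤ Real.logb 2 (Cm*ω0*(2^l*N)) := by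
      rw [show (s j:ℝ)*α j = Real.logb 2 X from (Real.logb_rpow two_pos (by norm_num)).symm]
      exact Real.logb_le_logb_of_le one_lt_two hXpos h8
    have h10 : Real.logb 2 (Cm*ω0*(2^l*N)) = Real.logb 2 (Cm*ω0*2^l) + L := by
      rw [show Cm*ω0*((2:ℝ)^l*N) = (Cm*ω0*2^l)*N by ring,
        Real.logb_mul (by positivity) (by positivity), hL]
    have h11 : Real.logb 2 (Cm*ω0*2^l) ≤ L := by
      have : Real.logb 2 (Cm*ω0*2^l) = Real.logb 2 (Cm*2^l*ω0) := by ring_nf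
      have hEE : Real.logb 2 (Cm*ω0*2^l) ≤ E := le_trans (le_max_left _ _) (le_max_right 1 _)
      linarith
    have h12 : (s j:ℝ)*a ≤ 2*L := by
      have : (s j:ℝ)*a ≤ (s j:ℝ)*α j :=
        mul_le_mul_of_nonneg_left (hale j) (Nat.cast_nonneg _)
      linarith
    rw [le_div_iff₀ hapos]
    linarith
  -- Window lemma
  have hWin : ∀ (base : Fin (m+1) → ℕ) (k : ℕ), Ω (negTwoPow base) < 1/N →
      1/(2^l*N) ≤ Ω (negTwoPow (Function.update base 0 (base 0 + k))) → k ≤ K₀ := by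
    intro base k hb hk
    have hdec := Stmt3Aux.decay (hCf2 0) base k
    have h2p : (0:ℝ) < Cf 0 * (2:ℝ)^(-(k:ℝ)*α 0) := by
      have := hCf1 0
      positivity
    have h1 : 1/(2^l*N) ≤ Cf 0 * (2:ℝ)^(-(k:ℝ)*α 0) * (1/N) := by
      calc 1/(2^l*N) ≤ Cf 0 * (2:ℝ)^(-(k:ℝ)*α 0) * Ω (negTwoPow base) := le_trans hk hdec
        _ ≤ Cf 0 * (2:ℝ)^(-(k:ℝ)*α 0) * (1/N) := mul_le_mul_of_nonneg_left hb.le h2p.le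
    have h2 : (1:ℝ)/2^l ≤ Cf 0 * (2:ℝ)^(-(k:ℝ)*α 0) := by
      calc (1:ℝ)/2^l = (1/(2^l*N))*N := by field_simp
        _ ≤ (Cf 0 * (2:ℝ)^(-(k:ℝ)*α 0) * (1/N))*N := mul_le_mul_of_nonneg_right h1 hNpos.le
        _ = Cf 0 * (2:ℝ)^(-(k:ℝ)*α 0) := by field_simp
    set Y : ℝ := (2:ℝ)^((k:ℝ)*α 0) with hY
    have hYpos : 0 < Y := by positivity
    have hYY : (2:ℝ)^(-(k:ℝ)*α 0) * Y = 1 := by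
      rw [hY, ← Real.rpow_add two_pos]
      ring_nf
      simp
    have h3 : Y ≤ Cf 0 * 2^l := by
      have h3' : Y/2^l ≤ Cf 0 := by
        calc Y/2^l = ((1:ℝ)/2^l)*Y := by ring
          _ ≤ (Cf 0 * (2:ℝ)^(-(k:ℝ)*α 0))*Y := mul_le_mul_of_nonneg_right h2 hYpos.le
          _ = Cf 0 * ((2:ℝ)^(-(k:ℝ)*α 0)*Y) := by ring
          _ = Cf 0 := by rw [hYY]; ring
      rw [div_le_iff₀ (by positivity : (0:ℝ) < 2^l)] at h3'
      linarith
    have h4 : (k:ℝ)*α 0 ≤ Real.logb 2 (Cf 0) + l := by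
      have hlogY : (k:ℝ)*α 0 = Real.logb 2 Y := (Real.logb_rpow two_pos (by norm_num)).symm
      have hC0pos : (0:ℝ) < Cf 0 := lt_of_lt_of_le one_pos (hCf1 0)
      have h5 : Real.logb 2 Y ≤ Real.logb 2 (Cf 0 * 2^l) :=
        Real.logb_le_logb_of_le one_lt_two hYpos h3
      have h6 : Real.logb 2 ((2:ℝ)^l) = (l:ℝ) := by
        rw [← Real.rpow_natCast 2 l, Real.logb_rpow two_pos (by norm_num)]
      rw [Real.logb_mul (ne_of_gt hC0pos) (by positivity), h6] at h5
      linarith [hlogY ▸ h5]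
    have h7 : (k:ℝ) ≤ ((l:ℝ) + Real.logb 2 (Cf 0)) / α 0 := by
      rw [le_div_iff₀ (hα 0).1]
      linarith
    have h8 : (k:ℝ) ≤ (K₀:ℝ) := le_trans h7 (Nat.le_ceil _)
    exact_mod_cast h8
  -- box size for the lower bound
  set D : ℕ := ⌊L/(2*((m:ℝ)*l+1))⌋₊ with hD
  -- L1: on the box, ω(cons 0 t) ≥ 1/N
  have hL1box : ∀ t : Fin m → ℕ, (∀ i, t i ≤ D) → 1/N ≤ Ω (negTwoPow (Fin.cons 0 t)) := by
    intro t ht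
    have hsum := Stmt3Aux.sum_lower_aux hΩ (∑ j, (Fin.cons 0 t : Fin (m+1) → ℕ) j) (Fin.cons 0 t) rfl
    have hsumle : (∑ j, (Fin.cons (0:ℕ) t : Fin (m+1) → ℕ) j) ≤ m*D := by
      rw [Fin.sum_cons]
      have : ∑ i, t i ≤ ∑ _i : Fin m, D := Finset.sum_le_sum fun i _ => ht i
      simpa using this
    have h1 : (2:ℝ)^(-((l:ℝ)*((m*D : ℕ):ℝ))) * ω0 ≤ Ω (negTwoPow (Fin.cons 0 t)) := by
      refine le_trans ?_ hsum
      refine mul_le_mul_of_nonneg_right ?_ hω0pos.le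
      apply Real.rpow_le_rpow_of_exponent_le one_le_two
      have hc : ((∑ j, (Fin.cons (0:ℕ) t : Fin (m+1) → ℕ) j : ℕ):ℝ) ≤ ((m*D:ℕ):ℝ) := Nat.cast_le.mpr hsumle
      nlinarith [(Nat.cast_nonneg l : (0:ℝ) ≤ (l:ℝ)), hc]
    have h2 : (1:ℝ)/N = (2:ℝ)^(-L) := by
      rw [Real.rpow_neg two_pos.le, hNL, one_div]
    rw [h2]
    refine le_trans ?_ h1
    have hω0e : ω0 = (2:ℝ)^(Real.logb 2 ω0) := (Real.rpow_logb two_pos (by norm_num) hω0pos).symm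
    nth_rewrite 1 [hω0e]
    rw [← Real.rpow_add two_pos]
    apply Real.rpow_le_rpow_of_exponent_le one_le_two
    have hDle : ((m*D:ℕ):ℝ)*(l:ℝ) ≤ L/2 := by
      have h3 : (D:ℝ) ≤ L/(2*((m:ℝ)*l+1)) := Nat.floor_le (by positivity)
      have h4 : (D:ℝ)*(2*((m:ℝ)*l+1)) ≤ L := by
        rw [← le_div_iff₀ (by positivity)]
        exact h3
      have h5 : ((m*D:ℕ):ℝ) = (m:ℝ)*(D:ℝ) := by push_cast; ring
      rw [h5]
      have hd0 : (0:ℝ) ≤ (D:ℝ) := Nat.cast_nonneg D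
      linarith [h4, hd0]
    have hE2 : -2 * Real.logb 2 ω0 ≤ L :=
      le_trans (le_trans (le_max_right _ _) (le_max_right 1 _)) hLE
    linarith
  -- L2: existence of a crossing index
  have hEx : ∀ t : Fin m → ℕ, ∃ k : ℕ, Ω (negTwoPow (Fin.cons k t)) < 1/N := by
    intro t
    have h1lt : (1:ℝ) < (2:ℝ)^(α 0) := by
      rw [show (1:ℝ) = (2:ℝ)^(0:ℝ) by norm_num]
      exact Real.rpow_lt_rpow_of_exponent_lt one_lt_two (hα 0).1
    obtain ⟨k, hk⟩ := pow_unbounded_of_one_lt (Cm*ω0*N) h1lt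
    refine ⟨k, ?_⟩
    have hdec := Stmt3Aux.decay (hCf2 0) (Fin.cons 0 t) k
    have hupd : Function.update (Fin.cons (0:ℕ) t : Fin (m+1) → ℕ) 0 ((Fin.cons (0:ℕ) t : Fin (m+1) → ℕ) 0 + k) = Fin.cons k t := by
      funext i
      refine Fin.cases ?_ (fun i => ?_) i
      · simp
      · simp [Function.update_of_ne (Fin.succ_ne_zero i)]
    rw [hupd] at hdec
    have hmono : Ω (negTwoPow (Fin.cons (0:ℕ) t)) ≤ ω0 := by
      rw [hω0]
      exact Stmt3Aux.omega_anti hΩ (fun i => Nat.zero_le _)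
    have h2p : (0:ℝ) < (2:ℝ)^(-(k:ℝ)*α 0) := by positivity
    have h4 : Ω (negTwoPow (Fin.cons k t)) ≤ Cm * (2:ℝ)^(-(k:ℝ)*α 0) * ω0 := by
      calc Ω (negTwoPow (Fin.cons k t))
          ≤ Cf 0 * (2:ℝ)^(-(k:ℝ)*α 0) * Ω (negTwoPow (Fin.cons (0:ℕ) t)) := hdec
        _ ≤ Cm * (2:ℝ)^(-(k:ℝ)*α 0) * ω0 := by
            apply mul_le_mul
            · exact mul_le_mul_of_nonneg_right (hCmle 0) h2p.le
            · exact hmono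
            · exact le_of_lt (Stmt3Aux.omega_pos hΩ _)
            · positivity
    refine lt_of_le_of_lt h4 ?_
    have hYe : (2:ℝ)^(-(k:ℝ)*α 0) = (((2:ℝ)^(α 0))^k)⁻¹ := by
      rw [← Real.rpow_natCast ((2:ℝ)^(α 0)) k, ← Real.rpow_mul two_pos.le,
        ← Real.rpow_neg two_pos.le]
      ring_nf
    rw [hYe]
    set Y : ℝ := ((2:ℝ)^(α 0))^k with hYdef
    have hYpos : (0:ℝ) < Y := by positivity
    rw [lt_div_iff₀ hNpos]
    have : Cm * Y⁻¹ * ω0 * N = (Cm*ω0*N)/Y := by field_simp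
    rw [this, div_lt_one hYpos]
    exact hk
  -- the crossing function κ and the map F
  obtain ⟨κ, hκmem, hκle, hκmin⟩ :
      ∃ κ : (Fin m → ℕ) → ℕ, (∀ t, Ω (negTwoPow (Fin.cons (κ t) t)) < 1/N) ∧
        (∀ t (k : ℕ), Ω (negTwoPow (Fin.cons k t)) < 1/N → κ t ≤ k) ∧
        (∀ t (k : ℕ), k < κ t → 1/N ≤ Ω (negTwoPow (Fin.cons k t))) :=
    ⟨fun t => sInf {k | Ω (negTwoPow (Fin.cons k t)) < 1/N},
      fun t => Nat.sInf_mem (hEx t), fun t k hk => Nat.sInf_le hk,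
      fun t k hk => not_lt.mp (Nat.notMem_of_lt_sInf hk)⟩
  have hFΛ : ∀ t : Fin m → ℕ, (∀ i, t i ≤ D) → (Fin.cons (κ t) t : Fin (m+1) → ℕ) ∈ Lam Ω l N := by
    intro t ht
    have h0 : κ t ≠ 0 := by
      intro h0
      have h1 := hκmem t
      rw [h0] at h1
      exact absurd h1 (not_lt.mpr (hL1box t ht))
    have hpred : 1/N ≤ Ω (negTwoPow (Fin.cons (κ t - 1) t)) :=
      hκmin t _ (by omega)
    have hstep := Stmt3Aux.step hΩ (Fin.cons (κ t - 1) t) 0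
    have hupd : Function.update (Fin.cons (κ t - 1) t : Fin (m+1) → ℕ) 0
        ((Fin.cons (κ t - 1) t : Fin (m+1) → ℕ) 0 + 1) = Fin.cons (κ t) t := by
      funext i
      refine Fin.cases ?_ (fun i => ?_) i
      · simp; omega
      · simp [Function.update_of_ne (Fin.succ_ne_zero i)]
    rw [hupd] at hstep
    refine (hmem _).mpr ⟨hκmem t, ?_⟩
    have h2 : 1/N ≤ 2^l * Ω (negTwoPow (Fin.cons (κ t) t)) := le_trans hpred hstep
    rw [div_le_iff₀ h2lN]
    rw [div_le_iff₀ hNpos] at h2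
    linarith
  set B : ℕ := ⌊2*L/a⌋₊ with hB
  have hκtail : ∀ s ∈ Lam Ω l N, κ (Fin.tail s) ≤ s 0 := by
    intro s hs
    apply hκle
    have h1 := ((hmem s).1 hs).1
    simpa [Fin.cons_self_tail] using h1
  have hWin' : ∀ s ∈ Lam Ω l N, s 0 - κ (Fin.tail s) ≤ K₀ := by
    intro s hs
    have hb := hκmem (Fin.tail s)
    have hk2 := ((hmem s).1 hs).2
    have hupd : Function.update (Fin.cons (κ (Fin.tail s)) (Fin.tail s) : Fin (m+1) → ℕ) 0
        ((Fin.cons (κ (Fin.tail s)) (Fin.tail s) : Fin (m+1) → ℕ) 0 + (s 0 - κ (Fin.tail s)))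
        = s := by
      funext i
      refine Fin.cases ?_ (fun i => ?_) i
      · have := hκtail s hs
        simp
        omega
      · simp [Function.update_of_ne (Fin.succ_ne_zero i), Fin.tail]
    refine hWin _ _ hb ?_
    rw [hupd]
    exact hk2
  set g : (Fin (m+1) → ℕ) → ℕ × (Fin m → ℕ) :=
    fun s => (s 0 - κ (Fin.tail s), Fin.tail s) with hg
  have hInj : Set.InjOn g (Lam Ω l N) := by
    intro s hs s' hs' h
    have ht : Fin.tail s = Fin.tail s' := congrArg Prod.snd h
    have h1 : s 0 - κ (Fin.tail s) = s' 0 - κ (Fin.tail s') := congrArg Prod.fst h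
    have h2 := hκtail s hs
    have h3 := hκtail s' hs'
    rw [ht] at h1 h2
    have h0 : s 0 = s' 0 := by omega
    funext i
    refine Fin.cases ?_ (fun i => ?_) i
    · exact h0
    · have := congrFun ht i
      simpa [Fin.tail] using this
  have himg : g '' (Lam Ω l N) ⊆
      ↑((Finset.range (K₀+1)) ×ˢ (Fintype.piFinset fun _ : Fin m => Finset.range (B+1))) := by
    rintro _ ⟨s, hs, rfl⟩
    simp only [hg, Finset.coe_product, Set.mem_prod, Finset.mem_coe, Finset.mem_range,
      Fintype.mem_piFinset]
    constructor
    · exact Nat.lt_succ_of_le (hWin' s hs)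
    · intro i
      refine Nat.lt_succ_of_le (Nat.le_floor ?_)
      exact hU1 s hs i.succ
  have hfin : (Lam Ω l N).Finite :=
    Set.Finite.of_finite_image (Set.Finite.subset (Finset.finite_toSet _) himg) hInj
  have hcardUB : (Lam Ω l N).ncard ≤ (K₀+1) * (B+1)^m := by
    calc (Lam Ω l N).ncard = (g '' (Lam Ω l N)).ncard := (Set.ncard_image_of_injOn hInj).symm
      _ ≤ ((Finset.range (K₀+1)) ×ˢ (Fintype.piFinset fun _ : Fin m => Finset.range (B+1))
            : Finset (ℕ × (Fin m → ℕ))).card := by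
          rw [← Set.ncard_coe_finset]
          exact Set.ncard_le_ncard himg (Finset.finite_toSet _)
      _ = (K₀+1) * (B+1)^m := by
          rw [Finset.card_product, Fintype.card_piFinset]
          simp
  -- lower bound count
  have hFinj : Set.InjOn (fun t : Fin m → ℕ => (Fin.cons (κ t) t : Fin (m+1) → ℕ))
      ↑(Fintype.piFinset fun _ : Fin m => Finset.range (D+1)) := by
    intro t _ t' _ h
    have := congrArg Fin.tail h
    simpa [Fin.tail_cons] using this
  have himg2 : (fun t : Fin m → ℕ => (Fin.cons (κ t) t : Fin (m+1) → ℕ)) ''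
      ↑(Fintype.piFinset fun _ : Fin m => Finset.range (D+1)) ⊆ Lam Ω l N := by
    rintro _ ⟨t, ht, rfl⟩
    refine hFΛ t fun i => ?_
    have := (Fintype.mem_piFinset.mp ht) i
    rw [Finset.mem_range] at this
    omega
  have hcardLB : (D+1)^m ≤ (Lam Ω l N).ncard := by
    calc (D+1)^m
        = (Fintype.piFinset fun _ : Fin m => Finset.range (D+1)).card := by
          rw [Fintype.card_piFinset]
          simp
      _ = ((Fintype.piFinset fun _ : Fin m => Finset.range (D+1) : Finset (Fin m → ℕ))
            : Set (Fin m → ℕ)).ncard := (Set.ncard_coe_finset _).symm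
      _ = ((fun t : Fin m → ℕ => (Fin.cons (κ t) t : Fin (m+1) → ℕ)) ''
            ↑(Fintype.piFinset fun _ : Fin m => Finset.range (D+1))).ncard :=
          (Set.ncard_image_of_injOn hFinj).symm
      _ ≤ (Lam Ω l N).ncard := Set.ncard_le_ncard himg2 hfin
  refine ⟨⟨_, hFΛ (fun _ => 0) fun i => Nat.zero_le _⟩, ?_, ?_⟩
  · rw [Real.rpow_natCast]
    have hD1 : L/(2*((m:ℝ)*l+1)) < (D:ℝ)+1 := Nat.lt_floor_add_one _
    have hcast : (((D+1)^m : ℕ):ℝ) ≤ ((Lam Ω l N).ncard : ℝ) := Nat.cast_le.mpr hcardLB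
    calc ((2*((m:ℝ)*l+1))⁻¹)^m * L^m = (L/(2*((m:ℝ)*l+1)))^m := by
          rw [← mul_pow]
          congr 1
          field_simp
      _ ≤ ((D:ℝ)+1)^m := pow_le_pow_left₀ (by positivity) hD1.le m
      _ = (((D+1)^m : ℕ):ℝ) := by push_cast; ring
      _ ≤ _ := hcast
  · rw [Real.rpow_natCast]
    have hBle : (B:ℝ) ≤ 2*L/a := Nat.floor_le (by positivity)
    have hB1 : (B:ℝ)+1 ≤ (2/a+1)*L := by
      have he : 2*L/a = (2/a)*L := by ring
      rw [he] at hBle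
      nlinarith
    calc ((Lam Ω l N).ncard : ℝ) ≤ (((K₀+1)*(B+1)^m : ℕ):ℝ) := Nat.cast_le.mpr hcardUB
      _ = ((K₀:ℝ)+1) * ((B:ℝ)+1)^m := by push_cast; ring
      _ ≤ ((K₀:ℝ)+1) * ((2/a+1)*L)^m := by
          refine mul_le_mul_of_nonneg_left (pow_le_pow_left₀ (by positivity) hB1 m) (by positivity)
      _ = ((K₀:ℝ)+1) * (2/a+1)^m * L^m := by rw [mul_pow]; ring
end

section
/- Let Ω be a function of mixed modulus-of-continuity type of order l satisfying conditions (S) and (S_l), and let 1 ≤ τ_j < ∞ for j = 1,...,m. Then the mixed ℓ_τ̄-norm of the indicator of Λ(Ω,N) satisfies ‖{χ_{Λ(Ω,N)}(s̄)}_{s̄ ∈ Λ(Ω,N)}‖_{ℓ_τ̄} ≍ (log₂ N)^{Σ_{j=2}^m 1/τ_j} as N → ∞. -/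
open scoped BigOperators ENNReal
open MeasureTheory Real Set

open scoped Classical in
lemma msn_succ (m : ℕ) (τ : Fin (m+1) → ℝ) (a : (Fin (m+1) → ℕ) → ℝ) :
    mixedSeqNorm (m+1) τ a = mixedSeqNorm m (fun j => τ j.succ)
      (fun s => (∑' k : ℕ, |a (Fin.cons k s)| ^ (τ 0)) ^ (1 / τ 0)) := rfl

lemma rpow_sum' {ι : Type*} (s : Finset ι) {x : ℝ} (hx : 0 < x) (f : ι → ℝ) :
    x ^ (∑ i ∈ s, f i) = ∏ i ∈ s, x ^ f i := by
  induction s using Finset.cons_induction with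
  | empty => simp
  | cons a s ha ih => rw [Finset.sum_cons, Finset.prod_cons, Real.rpow_add hx, ih]

lemma sum_erase_zero (m : ℕ) (f : Fin (m+1) → ℝ) :
    ∑ j ∈ Finset.univ.erase 0, f j = ∑ j : Fin m, f j.succ := by
  have h1 : f 0 + ∑ j ∈ Finset.univ.erase 0, f j = ∑ j, f j :=
    Finset.add_sum_erase _ f (Finset.mem_univ 0)
  have h2 : ∑ j, f j = f 0 + ∑ j : Fin m, f j.succ := Fin.sum_univ_succ f
  linarith

lemma mem_Lam_iff {m : ℕ} (Ω : (Fin m → ℝ) → ℝ) (l : ℕ) (N : ℝ) (s : Fin m → ℕ) :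
    s ∈ Lam Ω l N ↔ Ω (negTwoPow s) < 1/N ∧ 1/(2^l*N) ≤ Ω (negTwoPow s) := by
  simp [Lam, GamPerp, Gam, Set.mem_diff, not_le, Set.mem_setOf_eq, one_div]

lemma negTwoPow_mem {m : ℕ} (s : Fin m → ℕ) (i : Fin m) :
    negTwoPow s i ∈ Set.Ioc (0:ℝ) 1 :=
  ⟨Real.rpow_pos_of_pos two_pos _,
   Real.rpow_le_one_of_one_le_of_nonpos one_le_two (neg_nonpos.2 (Nat.cast_nonneg _))⟩

lemma twoPowNeg_mem (x : ℝ) (hx : 0 ≤ x) : (2:ℝ) ^ (-x) ∈ Set.Ioc (0:ℝ) 1 :=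
  ⟨Real.rpow_pos_of_pos two_pos _,
   Real.rpow_le_one_of_one_le_of_nonpos one_le_two (neg_nonpos.2 hx)⟩

open scoped Classical in
lemma squeeze_lemma : ∀ (m : ℕ) (τ : Fin m → ℝ), (∀ j, 1 ≤ τ j) →
    ∀ (a : (Fin m → ℕ) → ℝ) (n n' : Fin m → ℕ) (c c' : ℝ), 0 ≤ c' →
    (∀ s : Fin m → ℕ, (if ∀ j, s j ≤ n' j then c' else 0) ≤ a s) →
    (∀ s : Fin m → ℕ, a s ≤ (if ∀ j, s j ≤ n j then c else 0)) →
    c' * ∏ j, ((n' j : ℝ)+1) ^ (1/τ j) ≤ mixedSeqNorm m τ a ∧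
      mixedSeqNorm m τ a ≤ c * ∏ j, ((n j : ℝ)+1) ^ (1/τ j) := by
  intro m
  induction m with
  | zero =>
    intro τ hτ a n n' c c' hc' hlow hup
    have hl := hlow (fun i => i.elim0)
    have hu := hup (fun i => i.elim0)
    rw [if_pos (fun j => j.elim0)] at hl
    rw [if_pos (fun j => j.elim0)] at hu
    have ha : 0 ≤ a (fun i => i.elim0) := le_trans hc' hl
    simp only [mixedSeqNorm, Finset.univ_eq_empty, Finset.prod_empty, mul_one,
      abs_of_nonneg ha]
    exact ⟨hl, hu⟩
  | succ m ih =>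
    intro τ hτ a n n' c c' hc' hlow hup
    have hτ0 : 0 < τ 0 := lt_of_lt_of_le one_pos (hτ 0)
    have hτ0' : (0:ℝ) < 1 / τ 0 := by positivity
    have ha : ∀ s, 0 ≤ a s := fun s => le_trans (by split <;> simp [hc']) (hlow s)
    have hc : 0 ≤ c := by
      have h := hup (fun _ => 0)
      rw [if_pos (fun j => Nat.zero_le _)] at h
      exact le_trans (ha _) h
    set A : (Fin m → ℕ) → ℝ := fun s => (∑' k : ℕ, |a (Fin.cons k s)| ^ (τ 0)) ^ (1 / τ 0)
      with hA
    rw [msn_succ]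
    have hvan : ∀ v : Fin (m+1) → ℕ, (¬ ∀ j, v j ≤ n j) → a v = 0 := by
      intro v hv
      have h := hup v; rw [if_neg hv] at h
      exact le_antisymm h (ha v)
    have habs : ∀ v, |a v| = a v := fun v => abs_of_nonneg (ha v)
    have hsummable : ∀ s : Fin m → ℕ, Summable (fun k => |a (Fin.cons k s)| ^ (τ 0)) := by
      intro s
      apply summable_of_ne_finset_zero (s := Finset.range (n 0 + 1))
      intro k hk
      have hk' : ¬ k ≤ n 0 := fun h => hk (Finset.mem_range.2 (Nat.lt_succ_of_le h))
      have hz : a (Fin.cons k s) = 0 := by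
        apply hvan; intro hall; exact hk' (by simpa using hall 0)
      rw [hz, abs_zero, Real.zero_rpow (ne_of_gt hτ0)]
    have hAnonneg : ∀ s, 0 ≤ A s := fun s => Real.rpow_nonneg
      (tsum_nonneg (fun k => Real.rpow_nonneg (abs_nonneg _) _)) _
    -- upper bound on A
    have hAup : ∀ s : Fin m → ℕ, A s ≤
        (if ∀ j : Fin m, s j ≤ n j.succ then c * ((n 0 : ℝ)+1) ^ (1/τ 0) else 0) := by
      intro s
      by_cases hs : ∀ j : Fin m, s j ≤ n j.succ
      · rw [if_pos hs]
        have hle : ∀ k, |a (Fin.cons k s)| ^ (τ 0) ≤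
            (fun k => if k ≤ n 0 then c ^ (τ 0) else 0) k := by
          intro k
          by_cases hk : k ≤ n 0
          · simp only [hk, if_true]
            rw [habs]
            apply Real.rpow_le_rpow (ha _) ?_ (le_of_lt hτ0)
            refine le_trans (hup _) ?_
            split <;> simp [hc]
          · simp only [hk, if_false]
            rw [hvan _ (fun hall => hk (by simpa using hall 0)), abs_zero,
              Real.zero_rpow (ne_of_gt hτ0)]
        have hsum2 : Summable (fun k : ℕ => if k ≤ n 0 then c ^ (τ 0) else 0) := by
          apply summable_of_ne_finset_zero (s := Finset.range (n 0 + 1))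
          intro k hk
          have : ¬ k ≤ n 0 := fun h => hk (Finset.mem_range.2 (Nat.lt_succ_of_le h))
          simp [this]
        have htsum2 : (∑' k : ℕ, (if k ≤ n 0 then c ^ (τ 0) else 0) : ℝ)
            = ((n 0 : ℝ) + 1) * c ^ (τ 0) := by
          rw [tsum_eq_sum (s := Finset.range (n 0 + 1))
            (by intro k hk
                have : ¬ k ≤ n 0 := fun h => hk (Finset.mem_range.2 (Nat.lt_succ_of_le h))
                simp [this])]
          rw [Finset.sum_ite_of_true (fun k hk => Nat.lt_succ_iff.1 (Finset.mem_range.1 hk))]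
          simp [mul_comm]
        calc A s ≤ (((n 0:ℝ)+1) * c ^ (τ 0)) ^ (1/τ 0) := by
              apply Real.rpow_le_rpow (tsum_nonneg (fun k => Real.rpow_nonneg (abs_nonneg _) _))
                (le_of_le_of_eq (Summable.tsum_le_tsum hle (hsummable s) hsum2) htsum2) (le_of_lt hτ0')
          _ = c * ((n 0:ℝ)+1) ^ (1/τ 0) := by
              rw [Real.mul_rpow (by positivity) (Real.rpow_nonneg hc _),
                ← Real.rpow_mul hc, mul_one_div_cancel (ne_of_gt hτ0), Real.rpow_one,
                mul_comm]
      · rw [if_neg hs]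
        have hz : ∀ k : ℕ, |a (Fin.cons k s)| ^ (τ 0) = 0 := by
          intro k
          rw [hvan _ ?_, abs_zero, Real.zero_rpow (ne_of_gt hτ0)]
          intro hall
          exact hs (fun j => by simpa using hall j.succ)
        simp only [hA, hz, tsum_zero, Real.zero_rpow (ne_of_gt hτ0')]
        exact le_refl 0
    -- lower bound on A
    have hAlow : ∀ s : Fin m → ℕ,
        (if ∀ j : Fin m, s j ≤ n' j.succ then c' * ((n' 0 : ℝ)+1) ^ (1/τ 0) else 0) ≤ A s := by
      intro s
      by_cases hs : ∀ j : Fin m, s j ≤ n' j.succ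
      · rw [if_pos hs]
        have hle : ∀ k, (fun k : ℕ => if k ≤ n' 0 then c' ^ (τ 0) else 0) k ≤
            |a (Fin.cons k s)| ^ (τ 0) := by
          intro k
          by_cases hk : k ≤ n' 0
          · simp only [hk, if_true]
            rw [habs]
            apply Real.rpow_le_rpow hc' ?_ (le_of_lt hτ0)
            refine le_trans ?_ (hlow _)
            rw [if_pos]
            intro j
            refine Fin.cases ?_ ?_ j
            · simpa using hk
            · intro i; simpa using hs i
          · simp only [hk, if_false]
            exact Real.rpow_nonneg (abs_nonneg _) _
        have hsum2 : Summable (fun k : ℕ => if k ≤ n' 0 then c' ^ (τ 0) else 0) := by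
          apply summable_of_ne_finset_zero (s := Finset.range (n' 0 + 1))
          intro k hk
          have : ¬ k ≤ n' 0 := fun h => hk (Finset.mem_range.2 (Nat.lt_succ_of_le h))
          simp [this]
        have htsum2 : (∑' k : ℕ, (if k ≤ n' 0 then c' ^ (τ 0) else 0) : ℝ)
            = ((n' 0 : ℝ) + 1) * c' ^ (τ 0) := by
          rw [tsum_eq_sum (s := Finset.range (n' 0 + 1))
            (by intro k hk
                have : ¬ k ≤ n' 0 := fun h => hk (Finset.mem_range.2 (Nat.lt_succ_of_le h))
                simp [this])]
          rw [Finset.sum_ite_of_true (fun k hk => Nat.lt_succ_iff.1 (Finset.mem_range.1 hk))]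
          simp [mul_comm]
        calc c' * ((n' 0:ℝ)+1) ^ (1/τ 0) = (((n' 0:ℝ)+1) * c' ^ (τ 0)) ^ (1/τ 0) := by
              rw [Real.mul_rpow (by positivity) (Real.rpow_nonneg hc' _),
                ← Real.rpow_mul hc', mul_one_div_cancel (ne_of_gt hτ0), Real.rpow_one,
                mul_comm]
          _ ≤ A s := by
              apply Real.rpow_le_rpow (by positivity)
                (le_of_eq_of_le htsum2.symm (Summable.tsum_le_tsum hle hsum2 (hsummable s)))
                (le_of_lt hτ0')
      · rw [if_neg hs]; exact hAnonneg s
    have hmain := ih (fun j => τ j.succ) (fun j => hτ j.succ) A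
      (fun j => n j.succ) (fun j => n' j.succ)
      (c * ((n 0 : ℝ)+1) ^ (1/τ 0)) (c' * ((n' 0 : ℝ)+1) ^ (1/τ 0))
      (by positivity) hAlow hAup
    constructor
    · refine le_trans (le_of_eq ?_) hmain.1
      rw [Fin.prod_univ_succ]; ring
    · refine le_trans hmain.2 (le_of_eq ?_)
      rw [Fin.prod_univ_succ]; ring

set_option maxHeartbeats 2000000 in
/-- `‖χ_{Λ(Ω,N)}‖_{ℓ_τ̄} ≍ (log₂ N)^{Σ_{j=2}^m 1/τ_j}` as `N → ∞`. -/
theorem stmt4 (m l : ℕ) (Ω : (Fin (m + 1) → ℝ) → ℝ)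
    (hΩ : IsMixedModulus l Ω) (hS : CondS Ω) (hSl : CondSl l Ω)
    (τ : Fin (m + 1) → ℝ) (hτ : ∀ j, 1 ≤ τ j) :
    ∃ C₁ C₂ : ℝ, 0 < C₁ ∧ 0 < C₂ ∧ ∃ N₀ : ℝ, ∀ N : ℝ, N₀ ≤ N →
      C₁ * Real.logb 2 N ^ (∑ j ∈ Finset.univ.erase (0 : Fin (m + 1)), 1 / τ j) ≤
        mixedSeqNorm (m + 1) τ ((Lam Ω l N).indicator fun _ => (1 : ℝ)) ∧
      mixedSeqNorm (m + 1) τ ((Lam Ω l N).indicator fun _ => (1 : ℝ)) ≤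
        C₂ * Real.logb 2 N ^ (∑ j ∈ Finset.univ.erase (0 : Fin (m + 1)), 1 / τ j) := by
  classical
  obtain ⟨α, hα, hAI⟩ := hS
  choose C hC1 hC2 using hAI
  obtain ⟨α', hα', -⟩ := hSl
  have hl1 : 1 ≤ l := by
    have h1 := (hα' 0).1; have h2 := (hα' 0).2
    have h3 : (0:ℝ) < l := lt_trans h1 h2
    have h4 : 0 < l := by exact_mod_cast h3
    omega
  have hτ0pos : ∀ j : Fin (m+1), (0:ℝ) < τ j := fun j => lt_of_lt_of_le one_pos (hτ j)
  have hτinv : ∀ j : Fin (m+1), (0:ℝ) < 1/τ j := fun j => by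
    have := hτ0pos j; positivity
  have hτle : ∀ j : Fin (m+1), 1/τ j ≤ 1 := fun j => by
    rw [div_le_one (hτ0pos j)]; exact hτ j
  set W := Ω (fun _ => 1) with hWdef
  have hW : 0 < W := hΩ.pos _ (fun _ => one_pos)
  have hα0 : 0 < α 0 := (hα 0).1
  have hC0 : 1 ≤ C 0 := hC1 0
  have hpow : ∀ x β : ℝ, ((2:ℝ)^(-x))^(-β) = (2:ℝ)^(x*β) := by
    intro x β
    rw [← Real.rpow_mul (by norm_num : (0:ℝ) ≤ 2), neg_mul_neg]
  have hupd : ∀ (k x : ℕ) (s : Fin m → ℕ),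
      Function.update (negTwoPow (Fin.cons k s)) 0 ((2:ℝ)^(-(x:ℝ))) =
        negTwoPow (Fin.cons x s) := by
    intro k x s; funext j
    refine Fin.cases ?_ (fun i => ?_) j
    · simp [negTwoPow]
    · rw [Function.update_of_ne (Fin.succ_ne_zero i)]
      simp [negTwoPow]
  -- decay in the first variable
  have hdecay : ∀ (s : Fin m → ℕ) (k : ℕ),
      Ω (negTwoPow (Fin.cons k s)) ≤
        C 0 * Ω (negTwoPow (Fin.cons 0 s)) * (2:ℝ)^(-((k:ℝ) * α 0)) := by
    intro s k
    have h := hC2 0 (negTwoPow (Fin.cons 0 s)) (fun i => negTwoPow_mem _ i)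
      ((2:ℝ)^(-(k:ℝ))) 1 (twoPowNeg_mem _ (Nat.cast_nonneg k)) ⟨one_pos, le_refl 1⟩
      (Real.rpow_le_one_of_one_le_of_nonpos one_le_two (neg_nonpos.2 (Nat.cast_nonneg k)))
    rw [hupd 0 k s] at h
    have h1 : Function.update (negTwoPow (Fin.cons 0 s)) 0 (1:ℝ) =
        negTwoPow (Fin.cons 0 s) := by
      have := hupd 0 0 s; simpa using this
    rw [h1, hpow, Real.one_rpow, one_mul] at h
    have h2 : (0:ℝ) < (2:ℝ)^((k:ℝ) * α 0) := Real.rpow_pos_of_pos two_pos _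
    have h3 := mul_le_mul_of_nonneg_left h (le_of_lt (inv_pos.2 h2))
    rw [inv_mul_cancel_left₀ (ne_of_gt h2)] at h3
    calc Ω (negTwoPow (Fin.cons k s))
        ≤ ((2:ℝ)^((k:ℝ)*α 0))⁻¹ * (C 0 * Ω (negTwoPow (Fin.cons 0 s))) := h3
      _ = C 0 * Ω (negTwoPow (Fin.cons 0 s)) * (2:ℝ)^(-((k:ℝ) * α 0)) := by
          rw [Real.rpow_neg (by norm_num : (0:ℝ) ≤ 2)]; ring
  -- dyadic step in the first variable
  have hstep : ∀ (s : Fin m → ℕ) (k : ℕ),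
      Ω (negTwoPow (Fin.cons k s)) ≤ 2^l * Ω (negTwoPow (Fin.cons (k+1) s)) := by
    intro s k
    have hk1 : ∀ j, 1 ≤ (Fin.cons 2 (fun _ => 1) : Fin (m+1) → ℕ) j := by
      intro j; refine Fin.cases ?_ (fun i => ?_) j <;> simp
    have h := hΩ.submul (Fin.cons 2 (fun _ => 1)) (negTwoPow (Fin.cons (k+1) s)) hk1
    have heq : (fun j => ((Fin.cons 2 (fun _ => 1) : Fin (m+1) → ℕ) j : ℝ) *
        negTwoPow (Fin.cons (k+1) s) j) = negTwoPow (Fin.cons k s) := by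
      funext j
      refine Fin.cases ?_ (fun i => ?_) j
      · simp only [Fin.cons_zero, negTwoPow, Nat.cast_ofNat]
        push_cast
        rw [show -(k:ℝ) = 1 + -((k:ℝ)+1) by ring, Real.rpow_add two_pos, Real.rpow_one]
      · simp [negTwoPow]
    have hprod : (∏ j, ((Fin.cons 2 (fun _ => 1) : Fin (m+1) → ℕ) j : ℝ)) = 2 := by
      rw [Fin.prod_univ_succ]; simp
    rw [heq, hprod] at h
    exact h
  set αm := Finset.univ.inf' Finset.univ_nonempty α with hαmdef
  have hαm : 0 < αm := (Finset.lt_inf'_iff _).2 (fun j _ => (hα j).1)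
  have hαmle : ∀ j, αm ≤ α j := fun j => Finset.inf'_le _ (Finset.mem_univ j)
  set K := 2/αm with hKdef
  have hK : 0 < K := by positivity
  set ε := 1/(2*((l:ℝ)*m+1)) with hεdef
  have hε : 0 < ε := by positivity
  have hε1 : ε ≤ 1 := by
    rw [hεdef, div_le_one (by positivity)]
    have : (0:ℝ) ≤ (l:ℝ)*m := by positivity
    linarith
  set D := ⌈((l:ℝ) + Real.logb 2 (C 0))/α 0⌉₊ with hDdef
  refine ⟨ε^m, ((D:ℝ)+1) * (K+1)^m, by positivity, by positivity,
    2 + (W⁻¹)^2 + (∑ j, C j) * W * 2^l, ?_⟩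
  intro N hN
  -- basic facts about N
  have hCsum : ∀ j, C j ≤ ∑ i, C i :=
    fun j => Finset.single_le_sum (fun i _ => le_trans zero_le_one (hC1 i)) (Finset.mem_univ j)
  have hCsum0 : (0:ℝ) ≤ ∑ i, C i :=
    Finset.sum_nonneg (fun i _ => le_trans zero_le_one (hC1 i))
  have hM0 : (0:ℝ) ≤ (∑ j, C j) * W * 2^l := by positivity
  have hN2 : (2:ℝ) ≤ N := by nlinarith [sq_nonneg W⁻¹]
  have hN0 : (0:ℝ) < N := lt_of_lt_of_le two_pos hN2
  have hNW : (W⁻¹)^2 ≤ N := by nlinarith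
  have hNC : ∀ j, C j * W * 2^l ≤ N := by
    intro j
    have h1 : C j * W * 2^l ≤ (∑ i, C i) * W * 2^l := by
      have h2 := mul_le_mul_of_nonneg_right (hCsum j)
        (mul_nonneg hW.le (by positivity : (0:ℝ) ≤ 2^l))
      calc C j * W * 2^l = C j * (W * 2^l) := by ring
        _ ≤ (∑ i, C i) * (W * 2^l) := h2
        _ = (∑ i, C i) * W * 2^l := by ring
    nlinarith [sq_nonneg W⁻¹]
  set L := Real.logb 2 N with hLdef
  have hL1 : 1 ≤ L := by
    rw [hLdef, Real.le_logb_iff_rpow_le one_lt_two hN0]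
    simpa using hN2
  have hL0 : 0 < L := lt_of_lt_of_le one_pos hL1
  set nn := ⌊K*L⌋₊ with hnn
  set nn' := ⌊ε*L⌋₊ with hnn'
  -- (1) box containment
  have hbox : ∀ v : Fin (m+1) → ℕ, v ∈ Lam Ω l N → ∀ j, (v j : ℝ) ≤ K * L := by
    intro v hv j
    have hmem := (mem_Lam_iff Ω l N v).1 hv
    have hmono : Ω (negTwoPow v) ≤
        Ω (Function.update (fun _ => (1:ℝ)) j ((2:ℝ)^(-(v j:ℝ)))) := by
      apply hΩ.mono
      intro i
      by_cases hij : i = j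
      · subst hij; rw [Function.update_self]; exact le_of_eq rfl
      · rw [Function.update_of_ne hij]; exact (negTwoPow_mem v i).2
    have h := hC2 j (fun _ => (1:ℝ)) (fun i => ⟨one_pos, le_refl 1⟩)
      ((2:ℝ)^(-(v j:ℝ))) 1 (twoPowNeg_mem _ (Nat.cast_nonneg _)) ⟨one_pos, le_refl 1⟩
      (Real.rpow_le_one_of_one_le_of_nonpos one_le_two (neg_nonpos.2 (Nat.cast_nonneg _)))
    rw [hpow, Real.one_rpow, one_mul, Function.update_eq_self] at h
    have hchain : (2:ℝ)^((v j:ℝ) * α j) * (1/(2^l*N)) ≤ C j * W := by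
      calc (2:ℝ)^((v j:ℝ) * α j) * (1/(2^l*N))
          ≤ (2:ℝ)^((v j:ℝ)*α j) * Ω (negTwoPow v) :=
            mul_le_mul_of_nonneg_left hmem.2 (Real.rpow_nonneg (by norm_num) _)
        _ ≤ (2:ℝ)^((v j:ℝ)*α j) *
            Ω (Function.update (fun _ => (1:ℝ)) j ((2:ℝ)^(-(v j:ℝ)))) :=
            mul_le_mul_of_nonneg_left hmono (Real.rpow_nonneg (by norm_num) _)
        _ ≤ C j * W := h
    have h2l : (0:ℝ) < 2^l * N := by positivity
    have hkey : (2:ℝ)^((v j:ℝ) * α j) ≤ C j * W * 2^l * N := by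
      have h3 := mul_le_mul_of_nonneg_right hchain (le_of_lt h2l)
      have e1 : (2:ℝ)^((v j:ℝ)*α j) * (1/(2^l*N)) * (2^l*N) = (2:ℝ)^((v j:ℝ)*α j) := by
        field_simp
      rw [e1] at h3
      calc (2:ℝ)^((v j:ℝ)*α j) ≤ C j * W * (2^l * N) := h3
        _ = C j * W * 2^l * N := by ring
    have hCW : (0:ℝ) < C j * W * 2^l := by
      have := hC1 j; positivity
    have hlog : (v j:ℝ) * α j ≤ Real.logb 2 (C j * W * 2^l) + L := by
      have h4 : (v j:ℝ) * α j = Real.logb 2 ((2:ℝ)^((v j:ℝ)*α j)) :=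
        (Real.logb_rpow two_pos (by norm_num)).symm
      rw [h4, hLdef, ← Real.logb_mul (ne_of_gt hCW) (ne_of_gt hN0)]
      exact Real.logb_le_logb_of_le one_lt_two (Real.rpow_pos_of_pos two_pos _) hkey
    have hlog2 : Real.logb 2 (C j * W * 2^l) ≤ L := by
      rw [hLdef]
      exact Real.logb_le_logb_of_le one_lt_two hCW (hNC j)
    have h5 : (v j:ℝ) * α j ≤ 2*L := by linarith
    have h6 : (v j:ℝ) ≤ 2*L/α j := by
      rw [le_div_iff₀ (hα j).1]; exact h5
    calc (v j:ℝ) ≤ 2*L/α j := h6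
      _ ≤ 2*L/αm := by
          apply div_le_div_of_nonneg_left (by linarith) hαm (hαmle j)
      _ = K*L := by rw [hKdef]; ring
  have hboxN : ∀ v, v ∈ Lam Ω l N → ∀ j, v j ≤ nn :=
    fun v hv j => Nat.le_floor (hbox v hv j)
  -- (2) count bound in the first variable
  have hcount : ∀ (s : Fin m → ℕ) (k₁ k₂ : ℕ), k₁ ≤ k₂ →
      Fin.cons k₁ s ∈ Lam Ω l N → Fin.cons k₂ s ∈ Lam Ω l N → k₂ ≤ k₁ + D := by
    intro s k₁ k₂ hk hm1 hm2
    have hmm1 := (mem_Lam_iff Ω l N _).1 hm1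
    have hmm2 := (mem_Lam_iff Ω l N _).1 hm2
    have h := hC2 0 (negTwoPow (Fin.cons 0 s)) (fun i => negTwoPow_mem _ i)
      ((2:ℝ)^(-(k₂:ℝ))) ((2:ℝ)^(-(k₁:ℝ))) (twoPowNeg_mem _ (Nat.cast_nonneg _))
      (twoPowNeg_mem _ (Nat.cast_nonneg _))
      (Real.rpow_le_rpow_of_exponent_le one_le_two (neg_le_neg (Nat.cast_le.2 hk)))
    rw [hupd 0 k₂ s, hupd 0 k₁ s, hpow, hpow] at h
    have hchain : (2:ℝ)^((k₂:ℝ)*α 0) * (1/(2^l*N)) ≤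
        C 0 * ((2:ℝ)^((k₁:ℝ)*α 0) * (1/N)) := by
      calc (2:ℝ)^((k₂:ℝ)*α 0) * (1/(2^l*N))
          ≤ (2:ℝ)^((k₂:ℝ)*α 0) * Ω (negTwoPow (Fin.cons k₂ s)) :=
            mul_le_mul_of_nonneg_left hmm2.2 (Real.rpow_nonneg (by norm_num) _)
        _ ≤ C 0 * ((2:ℝ)^((k₁:ℝ)*α 0) * Ω (negTwoPow (Fin.cons k₁ s))) := h
        _ ≤ C 0 * ((2:ℝ)^((k₁:ℝ)*α 0) * (1/N)) := by
            apply mul_le_mul_of_nonneg_left _ (le_trans zero_le_one hC0)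
            exact mul_le_mul_of_nonneg_left (le_of_lt hmm1.1)
              (Real.rpow_nonneg (by norm_num) _)
    have hkey : (2:ℝ)^((k₂:ℝ)*α 0) ≤ C 0 * (2:ℝ)^((k₁:ℝ)*α 0) * 2^l := by
      have h2l : (0:ℝ) < 2^l * N := by positivity
      have h3 := mul_le_mul_of_nonneg_right hchain (le_of_lt h2l)
      have e1 : (2:ℝ)^((k₂:ℝ)*α 0) * (1/(2^l*N)) * (2^l*N) = (2:ℝ)^((k₂:ℝ)*α 0) := by
        field_simp
      have e2 : C 0 * ((2:ℝ)^((k₁:ℝ)*α 0) * (1/N)) * (2^l*N) =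
          C 0 * (2:ℝ)^((k₁:ℝ)*α 0) * 2^l := by
        field_simp
      rw [e1, e2] at h3; exact h3
    have hpos1 : (0:ℝ) < C 0 * (2:ℝ)^((k₁:ℝ)*α 0) * 2^l := by
      have h0 : (0:ℝ) < C 0 := lt_of_lt_of_le one_pos hC0
      have h1 : (0:ℝ) < (2:ℝ)^((k₁:ℝ)*α 0) := Real.rpow_pos_of_pos two_pos _
      positivity
    have hlog : (k₂:ℝ)*α 0 ≤ Real.logb 2 (C 0) + (k₁:ℝ)*α 0 + l := by
      have h4 : (k₂:ℝ)*α 0 = Real.logb 2 ((2:ℝ)^((k₂:ℝ)*α 0)) :=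
        (Real.logb_rpow two_pos (by norm_num)).symm
      have h5 : Real.logb 2 (C 0 * (2:ℝ)^((k₁:ℝ)*α 0) * 2^l) =
          Real.logb 2 (C 0) + (k₁:ℝ)*α 0 + l := by
        rw [Real.logb_mul (by positivity) (by positivity),
          Real.logb_mul (ne_of_gt (lt_of_lt_of_le one_pos hC0))
            (ne_of_gt (Real.rpow_pos_of_pos two_pos _)),
          Real.logb_rpow two_pos (by norm_num)]
        congr 1
        rw [← Real.rpow_natCast 2 l, Real.logb_rpow two_pos (by norm_num)]
      rw [h4, ← h5]
      exact Real.logb_le_logb_of_le one_lt_two (Real.rpow_pos_of_pos two_pos _) hkey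
    have hfin : (k₂:ℝ) ≤ (k₁:ℝ) + (D:ℝ) := by
      have h6 : ((k₂:ℝ) - k₁) * α 0 ≤ (l:ℝ) + Real.logb 2 (C 0) := by nlinarith
      have h7 : (k₂:ℝ) - k₁ ≤ ((l:ℝ) + Real.logb 2 (C 0))/α 0 := by
        rw [le_div_iff₀ hα0]; exact h6
      have h8 : ((l:ℝ) + Real.logb 2 (C 0))/α 0 ≤ D := Nat.le_ceil _
      linarith
    exact_mod_cast hfin
  -- (3) existence of a crossing point
  have hexist : ∀ s : Fin m → ℕ, (∀ j, s j ≤ nn') → ∃ k, Fin.cons k s ∈ Lam Ω l N := by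
    intro s hs
    have hg0pos : 0 < Ω (negTwoPow (Fin.cons 0 s)) :=
      hΩ.pos _ (fun i => (negTwoPow_mem _ i).1)
    have hnn'le : (nn' : ℝ) ≤ ε * L := Nat.floor_le (by positivity)
    have hsum_le : (∑ i, (s i:ℝ)) ≤ (m:ℝ) * (ε * L) := by
      calc (∑ i, (s i:ℝ)) ≤ ∑ _i : Fin m, ε * L :=
            Finset.sum_le_sum (fun i _ => le_trans (Nat.cast_le.2 (hs i)) hnn'le)
        _ = (m:ℝ) * (ε * L) := by
            rw [Finset.sum_const, Finset.card_univ, Fintype.card_fin, nsmul_eq_mul]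
    have hεm : (l:ℝ) * ((m:ℝ) * ε) ≤ 1/2 := by
      have hx : (0:ℝ) ≤ (l:ℝ)*(m:ℝ) := by positivity
      have hd : (0:ℝ) < 2*((l:ℝ)*m+1) := by positivity
      have he : (l:ℝ) * ((m:ℝ) * ε) = ((l:ℝ)*m)/(2*((l:ℝ)*m+1)) := by
        rw [hεdef]; ring
      rw [he, div_le_div_iff₀ hd two_pos]
      linarith
    have hSig : ((∑ i, s i) * l : ℕ) ≤ Real.logb 2 W + L := by
      push_cast
      have h2 : (∑ i, (s i:ℝ)) * l ≤ (1/2) * L := by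
        calc (∑ i, (s i:ℝ)) * l ≤ ((m:ℝ) * (ε * L)) * l := by
              apply mul_le_mul_of_nonneg_right hsum_le (Nat.cast_nonneg l)
          _ = ((l:ℝ) * ((m:ℝ)*ε)) * L := by ring
          _ ≤ (1/2)*L := mul_le_mul_of_nonneg_right hεm hL0.le
      have h3 : -(1/2) * L ≤ Real.logb 2 W := by
        have hWpow : Real.logb 2 ((W⁻¹)^2) ≤ L := by
          rw [hLdef]
          exact Real.logb_le_logb_of_le one_lt_two (by positivity) hNW
        rw [Real.logb_pow, Real.logb_inv] at hWpow
        push_cast at hWpow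
        linarith
      linarith
    have hg0 : 1/N ≤ Ω (negTwoPow (Fin.cons 0 s)) := by
      have hk1 : ∀ j, 1 ≤ (Fin.cons 1 (fun i => 2^(s i)) : Fin (m+1) → ℕ) j := by
        intro j; refine Fin.cases ?_ (fun i => ?_) j
        · exact le_refl 1
        · simp only [Fin.cons_succ]
          exact Nat.one_le_two_pow
      have h := hΩ.submul (Fin.cons 1 (fun i => 2^(s i))) (negTwoPow (Fin.cons 0 s)) hk1
      have heq : (fun j => ((Fin.cons 1 (fun i => 2^(s i)) : Fin (m+1) → ℕ) j : ℝ) *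
          negTwoPow (Fin.cons 0 s) j) = fun _ => (1:ℝ) := by
        funext j
        refine Fin.cases ?_ (fun i => ?_) j
        · simp [negTwoPow]
        · simp only [Fin.cons_succ, negTwoPow]
          push_cast
          rw [← Real.rpow_natCast 2 (s i), ← Real.rpow_add two_pos]
          simp
      have hprod : (∏ j, ((Fin.cons 1 (fun i => 2^(s i)) : Fin (m+1) → ℕ) j : ℝ)) =
          2^(∑ i, s i) := by
        rw [Fin.prod_univ_succ]
        simp only [Fin.cons_zero, Fin.cons_succ, Nat.cast_one, one_mul, Nat.cast_pow,
          Nat.cast_ofNat]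
        rw [Finset.prod_pow_eq_pow_sum]
      rw [heq, hprod, ← pow_mul] at h
      have hpow_le : (2:ℝ)^((∑ i, s i)*l) ≤ W * N := by
        have he : (2:ℝ)^((∑ i, s i)*l) = (2:ℝ)^((((∑ i, s i)*l : ℕ)):ℝ) :=
          (Real.rpow_natCast 2 _).symm
        rw [he]
        have hlogWN : Real.logb 2 (W*N) = Real.logb 2 W + L := by
          rw [hLdef]; exact Real.logb_mul (ne_of_gt hW) (ne_of_gt hN0)
        calc (2:ℝ)^((((∑ i, s i)*l : ℕ)):ℝ) ≤ (2:ℝ)^(Real.logb 2 (W*N)) := by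
              apply Real.rpow_le_rpow_of_exponent_le one_le_two
              rw [hlogWN]; exact hSig
          _ = W*N := Real.rpow_logb (by positivity) (by norm_num) (by positivity)
      rw [div_le_iff₀ hN0]
      have h4 : W ≤ W * N * Ω (negTwoPow (Fin.cons 0 s)) := by
        calc W ≤ (2:ℝ)^((∑ i, s i)*l) * Ω (negTwoPow (Fin.cons 0 s)) := h
          _ ≤ W * N * Ω (negTwoPow (Fin.cons 0 s)) :=
              mul_le_mul_of_nonneg_right hpow_le hg0pos.le
      nlinarith [hW, hg0pos]
    have hdec : ∃ k : ℕ, Ω (negTwoPow (Fin.cons k s)) < 1/N := by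
      set B := C 0 * Ω (negTwoPow (Fin.cons 0 s)) with hB
      have hBpos : 0 < B := mul_pos (lt_of_lt_of_le one_pos hC0) hg0pos
      obtain ⟨k, hk⟩ := exists_pow_lt_of_lt_one
        (show (0:ℝ) < 1/(N*B) by positivity)
        (show (2:ℝ)^(-(α 0)) < 1 from
          Real.rpow_lt_one_of_one_lt_of_neg one_lt_two (neg_lt_zero.2 hα0))
      refine ⟨k, ?_⟩
      have h1 : ((2:ℝ)^(-(α 0)))^k = (2:ℝ)^(-((k:ℝ)*α 0)) := by
        rw [← Real.rpow_natCast ((2:ℝ)^(-(α 0))) k,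
          ← Real.rpow_mul (by norm_num : (0:ℝ) ≤ 2)]
        congr 1; ring
      calc Ω (negTwoPow (Fin.cons k s)) ≤ B * (2:ℝ)^(-((k:ℝ)*α 0)) := hdecay s k
        _ < B * (1/(N*B)) := by
            apply mul_lt_mul_of_pos_left _ hBpos
            rw [← h1]; exact hk
        _ = 1/N := by field_simp; try ring
    set k0 := Nat.find hdec with hk0def
    have hk0spec : Ω (negTwoPow (Fin.cons k0 s)) < 1/N := Nat.find_spec hdec
    have hk0ne : k0 ≠ 0 := by
      intro h0
      rw [h0] at hk0spec
      exact absurd hk0spec (not_lt.2 hg0)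
    refine ⟨k0, (mem_Lam_iff Ω l N _).2 ⟨hk0spec, ?_⟩⟩
    have hprev : 1/N ≤ Ω (negTwoPow (Fin.cons (k0-1) s)) :=
      not_lt.1 (Nat.find_min hdec (Nat.sub_lt (Nat.pos_of_ne_zero hk0ne) one_pos))
    have hstep' := hstep s (k0-1)
    rw [Nat.sub_add_cancel (Nat.one_le_iff_ne_zero.2 hk0ne)] at hstep'
    have h6 : 1/N ≤ 2^l * Ω (negTwoPow (Fin.cons k0 s)) := le_trans hprev hstep'
    rw [div_le_iff₀ hN0] at h6
    rw [div_le_iff₀ (by positivity : (0:ℝ) < 2^l*N)]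
    calc (1:ℝ) ≤ 2^l * Ω (negTwoPow (Fin.cons k0 s)) * N := h6
      _ = Ω (negTwoPow (Fin.cons k0 s)) * (2^l*N) := by ring
  -- the indicator function and its partial norms
  set aF := (Lam Ω l N).indicator (fun _ => (1:ℝ)) with haF
  have hapow : ∀ v, |aF v| ^ (τ 0) = if v ∈ Lam Ω l N then (1:ℝ) else 0 := by
    intro v
    rw [haF, Set.indicator_apply]
    split
    · rw [abs_one, Real.one_rpow]
    · rw [abs_zero, Real.zero_rpow (ne_of_gt (hτ0pos 0))]
  have hAup : ∀ s : Fin m → ℕ,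
      (∑' k : ℕ, |aF (Fin.cons k s)| ^ (τ 0)) ^ (1/τ 0) ≤
        (if ∀ j : Fin m, s j ≤ nn then ((D:ℝ)+1)^(1/τ 0) else 0) := by
    intro s
    by_cases hscase : ∀ j : Fin m, s j ≤ nn
    · rw [if_pos hscase]
      by_cases hne : ∃ k, Fin.cons k s ∈ Lam Ω l N
      · set k0 := Nat.find hne with hk0def
        have hk0 : Fin.cons k0 s ∈ Lam Ω l N := Nat.find_spec hne
        have hsum2 : Summable (fun k : ℕ => if k0 ≤ k ∧ k ≤ k0 + D then (1:ℝ) else 0) := by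
          apply summable_of_ne_finset_zero (s := Finset.Icc k0 (k0+D))
          intro k hk; rw [if_neg]; intro hc; exact hk (Finset.mem_Icc.2 hc)
        have htsum2 : (∑' k : ℕ, (if k0 ≤ k ∧ k ≤ k0 + D then (1:ℝ) else 0)) = (D:ℝ)+1 := by
          rw [tsum_eq_sum (s := Finset.Icc k0 (k0+D))
            (fun k hk => by rw [if_neg]; intro hc; exact hk (Finset.mem_Icc.2 hc))]
          rw [Finset.sum_ite_of_true (fun k hk => Finset.mem_Icc.1 hk),
            Finset.sum_const, Nat.card_Icc,
            show k0 + D + 1 - k0 = D + 1 by omega, nsmul_eq_mul, mul_one]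
          push_cast; ring
        have hfle : ∀ k, |aF (Fin.cons k s)| ^ (τ 0) ≤
            (if k0 ≤ k ∧ k ≤ k0 + D then (1:ℝ) else 0) := by
          intro k
          rw [hapow]
          by_cases hmem : Fin.cons k s ∈ Lam Ω l N
          · rw [if_pos hmem, if_pos ⟨Nat.find_min' hne hmem,
              hcount s k0 k (Nat.find_min' hne hmem) hk0 hmem⟩]
          · rw [if_neg hmem]
            split <;> norm_num
        have hsf : Summable (fun k => |aF (Fin.cons k s)| ^ (τ 0)) :=
          Summable.of_nonneg_of_le (fun k => Real.rpow_nonneg (abs_nonneg _) _) hfle hsum2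
        apply Real.rpow_le_rpow
          (tsum_nonneg (fun k => Real.rpow_nonneg (abs_nonneg _) _))
          (le_trans (Summable.tsum_le_tsum hfle hsf hsum2) (le_of_eq htsum2))
          (le_of_lt (hτinv 0))
      · push_neg at hne
        have hz : ∀ k : ℕ, |aF (Fin.cons k s)| ^ (τ 0) = 0 := fun k => by
          rw [hapow, if_neg (hne k)]
        simp only [hz, tsum_zero]
        rw [Real.zero_rpow (ne_of_gt (hτinv 0))]
        positivity
    · rw [if_neg hscase]
      push_neg at hscase
      obtain ⟨j, hj⟩ := hscase
      have hz : ∀ k : ℕ, |aF (Fin.cons k s)| ^ (τ 0) = 0 := by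
        intro k
        rw [hapow, if_neg]
        intro hmem
        exact (not_le.2 hj) (by simpa using hboxN _ hmem j.succ)
      simp only [hz, tsum_zero]
      rw [Real.zero_rpow (ne_of_gt (hτinv 0))]
  have hAlow : ∀ s : Fin m → ℕ,
      (if ∀ j : Fin m, s j ≤ nn' then (1:ℝ) else 0) ≤
        (∑' k : ℕ, |aF (Fin.cons k s)| ^ (τ 0)) ^ (1/τ 0) := by
    intro s
    by_cases hscase : ∀ j : Fin m, s j ≤ nn'
    · rw [if_pos hscase]
      obtain ⟨k, hk⟩ := hexist s hscase
      have hsum2 : Summable (fun k : ℕ => if k ≤ nn then (1:ℝ) else 0) := by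
        apply summable_of_ne_finset_zero (s := Finset.range (nn+1))
        intro k hk2
        rw [if_neg]
        intro hc; exact hk2 (Finset.mem_range.2 (Nat.lt_succ_of_le hc))
      have hfle : ∀ k, |aF (Fin.cons k s)| ^ (τ 0) ≤ (if k ≤ nn then (1:ℝ) else 0) := by
        intro k
        rw [hapow]
        by_cases hmem : Fin.cons k s ∈ Lam Ω l N
        · rw [if_pos hmem, if_pos (by simpa using hboxN _ hmem 0)]
        · rw [if_neg hmem]
          split <;> norm_num
      have hsf : Summable (fun k => |aF (Fin.cons k s)| ^ (τ 0)) :=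
        Summable.of_nonneg_of_le (fun k => Real.rpow_nonneg (abs_nonneg _) _) hfle hsum2
      have h1 : (1:ℝ) ≤ ∑' k, |aF (Fin.cons k s)| ^ (τ 0) := by
        have h2 := Summable.le_tsum hsf k (fun j _ => Real.rpow_nonneg (abs_nonneg _) _)
        rw [hapow, if_pos hk] at h2
        exact h2
      calc (1:ℝ) = 1 ^ (1/τ 0) := (Real.one_rpow _).symm
        _ ≤ (∑' k : ℕ, |aF (Fin.cons k s)| ^ (τ 0)) ^ (1/τ 0) :=
          Real.rpow_le_rpow zero_le_one h1 (le_of_lt (hτinv 0))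
    · rw [if_neg hscase]
      exact Real.rpow_nonneg
        (tsum_nonneg (fun k => Real.rpow_nonneg (abs_nonneg _) _)) _
  have happ := squeeze_lemma m (fun j => τ j.succ) (fun j => hτ j.succ)
    (fun s => (∑' k : ℕ, |aF (Fin.cons k s)| ^ (τ 0)) ^ (1/τ 0))
    (fun _ => nn) (fun _ => nn') (((D:ℝ)+1)^(1/τ 0)) 1 zero_le_one hAlow hAup
  rw [msn_succ m τ aF] at *
  obtain ⟨hlo, hhi⟩ := happ
  simp only [one_mul] at hlo
  have hE : (∑ j ∈ Finset.univ.erase (0 : Fin (m+1)), 1/τ j) = ∑ j : Fin m, 1/τ j.succ :=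
    sum_erase_zero m (fun j => 1/τ j)
  constructor
  · -- lower bound
    refine le_trans ?_ hlo
    rw [hE, rpow_sum' Finset.univ hL0]
    rw [show (ε^m : ℝ) = ∏ _j : Fin m, ε by
      rw [Finset.prod_const, Finset.card_univ, Fintype.card_fin]]
    rw [← Finset.prod_mul_distrib]
    apply Finset.prod_le_prod
    · intro j _
      exact mul_nonneg hε.le (Real.rpow_nonneg hL0.le _)
    · intro j _
      have h1 : ε * L ^ (1/τ j.succ) ≤ ε^(1/τ j.succ) * L^(1/τ j.succ) := by
        apply mul_le_mul_of_nonneg_right ?_ (Real.rpow_nonneg hL0.le _)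
        calc ε = ε^(1:ℝ) := (Real.rpow_one ε).symm
          _ ≤ ε^(1/τ j.succ) :=
            Real.rpow_le_rpow_of_exponent_ge hε hε1 (hτle j.succ)
      calc ε * L^(1/τ j.succ) ≤ ε^(1/τ j.succ) * L^(1/τ j.succ) := h1
        _ = (ε*L)^(1/τ j.succ) := (Real.mul_rpow hε.le hL0.le).symm
        _ ≤ ((nn':ℝ)+1)^(1/τ j.succ) :=
          Real.rpow_le_rpow (by positivity) (le_of_lt (Nat.lt_floor_add_one _))
            (le_of_lt (hτinv j.succ))
  · -- upper bound
    refine le_trans hhi ?_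
    have hD1 : (1:ℝ) ≤ (D:ℝ)+1 := by
      have : (0:ℝ) ≤ (D:ℝ) := Nat.cast_nonneg D
      linarith
    have hDK : ((D:ℝ)+1)^(1/τ 0) ≤ (D:ℝ)+1 := by
      calc ((D:ℝ)+1)^(1/τ 0) ≤ ((D:ℝ)+1)^(1:ℝ) :=
            Real.rpow_le_rpow_of_exponent_le hD1 (hτle 0)
        _ = (D:ℝ)+1 := Real.rpow_one _
    have hprodnn : ∀ j : Fin m, (0:ℝ) ≤ ((nn:ℝ)+1)^(1/τ j.succ) :=
      fun j => Real.rpow_nonneg (by positivity) _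
    have hprodle : ∏ j : Fin m, ((nn:ℝ)+1)^(1/τ j.succ) ≤
        (K+1)^m * L^(∑ j : Fin m, 1/τ j.succ) := by
      rw [rpow_sum' Finset.univ hL0,
        show ((K+1)^m : ℝ) = ∏ _j : Fin m, (K+1) by
          rw [Finset.prod_const, Finset.card_univ, Fintype.card_fin],
        ← Finset.prod_mul_distrib]
      apply Finset.prod_le_prod
      · intro j _; exact hprodnn j
      · intro j _
        have hfl : (nn:ℝ) ≤ K*L := Nat.floor_le (by positivity)
        have h0 : (nn:ℝ)+1 ≤ (K+1)*L := by nlinarith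
        calc ((nn:ℝ)+1)^(1/τ j.succ) ≤ ((K+1)*L)^(1/τ j.succ) :=
              Real.rpow_le_rpow (by positivity) h0 (le_of_lt (hτinv j.succ))
          _ = (K+1)^(1/τ j.succ) * L^(1/τ j.succ) :=
              Real.mul_rpow (by positivity) hL0.le
          _ ≤ (K+1) * L^(1/τ j.succ) := by
              apply mul_le_mul_of_nonneg_right ?_ (Real.rpow_nonneg hL0.le _)
              calc (K+1)^(1/τ j.succ) ≤ (K+1)^(1:ℝ) :=
                    Real.rpow_le_rpow_of_exponent_le (by linarith) (hτle j.succ)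
                _ = K+1 := Real.rpow_one _
    calc ((D:ℝ)+1)^(1/τ 0) * ∏ j : Fin m, ((nn:ℝ)+1)^(1/τ j.succ)
        ≤ ((D:ℝ)+1) * ((K+1)^m * L^(∑ j : Fin m, 1/τ j.succ)) := by
          apply mul_le_mul hDK hprodle (Finset.prod_nonneg (fun j _ => hprodnn j)) (by linarith)
      _ = (((D:ℝ)+1) * (K+1)^m) * L^(∑ j ∈ Finset.univ.erase (0 : Fin (m+1)), 1/τ j) := by
          rw [hE]; ring
end
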